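/- arXiv:1902.05224 — 8 statements merged into one kernel-verified Lean document; each statement's English description precedes it below -/
import Mathlib

section
/- For every i ∈ [1..n]: if SA[i] ≠ 1 then SA[LF(i)] = SA[i] − 1, and if SA[i] = 1 then SA[LF(i)] = n. (That is, the LF function maps the position of a character in the BWT to the suffix-array position of the suffix starting one position earlier in the text, cyclically.) -/
/-- The suffix `T[i..n]` of a 1-indexed string of length `n` (as a list). -/
def suffix {α : Type*} (T : ℕ → α) (n i : ℕ) : List α :=
  (List.range' i (n + 1 - i)).map T

/-- `rank(L,c,i)`: the number of occurrences of the character `c` in `L[1..i]`. -/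
def rankL {α : Type*} [DecidableEq α] (L : ℕ → α) (c : α) (i : ℕ) : ℕ :=
  ((Finset.Icc 1 i).filter (fun j => L j = c)).card

/-- `C[c]`: the number of positions `j ∈ [1..n]` with `L[j]` strictly smaller than `c`. -/
def Cc {α : Type*} [LinearOrder α] (L : ℕ → α) (n : ℕ) (c : α) : ℕ :=
  ((Finset.Icc 1 n).filter (fun j => L j < c)).card

/-- `LF(i) = C[L[i]] + rank(L, L[i], i)`. -/
def LF {α : Type*} [LinearOrder α] (L : ℕ → α) (n i : ℕ) : ℕ :=
  Cc L n (L i) + rankL L (L i) i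

/-!
Let `p` be the text position cyclically preceding `SA[i]`, and `k` its suffix-array index. By
sortedness, `k` counts the indices `j` with `T[SA[j]..] ≼ T[p..]`; since `SA` and the cyclic
predecessor are bijections of `[1..n]`, it equally counts the `j` whose cyclically preceding
suffix is `≼ T[p..]`. That suffix is `L[j]` followed by `T[SA[j]..]` (or just `T[n]` when
`SA[j] = 1`, the only `j` with `L[j] = T[n]`), so these `j` are exactly those with
`(L[j], j) ≤ (L[i], i)` lexicographically, and there are `C[L[i]] + rank(L, L[i], i) = LF(i)` of
them.
-/

open Finset

theorem List.cons_le_cons_iff' {α : Type*} [LinearOrder α] {a b : α} {l m : List α} :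
    a :: l ≤ b :: m ↔ a < b ∨ a = b ∧ l ≤ m := by
  simp only [le_iff_lt_or_eq, List.cons_lt_cons_iff, List.cons.injEq]
  tauto

theorem Finset.card_filter_comp_of_bijOn {ι : Type*} {s : Finset ι} {σ : ι → ι}
    (hσ : Set.BijOn σ s s) (P : ι → Prop) [DecidablePred P] :
    #{j ∈ s | P (σ j)} = #{q ∈ s | P q} := by
  refine card_nbij σ (fun j hj => ?_) (hσ.injOn.mono fun j hj => (mem_filter.1 hj).1)
    (fun q hq => ?_)
  · simp only [mem_coe, mem_filter] at hj ⊢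
    exact ⟨hσ.mapsTo hj.1, hj.2⟩
  · simp only [mem_coe, mem_filter] at hq
    obtain ⟨j, hj, rfl⟩ := hσ.surjOn hq.1
    exact ⟨j, by simpa using ⟨hj, hq.2⟩, rfl⟩

theorem card_filter_le_of_strictMonoOn {β : Type*} [Preorder β] [DecidableLE β] {f : ℕ → β}
    {n k : ℕ} (hf : StrictMonoOn f (Set.Icc 1 n)) (hk : k ∈ Set.Icc 1 n) :
    #{j ∈ Icc 1 n | f j ≤ f k} = k := by
  have : {j ∈ Icc 1 n | f j ≤ f k} = Icc 1 k := by
    ext j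
    simp only [mem_filter, mem_Icc]
    constructor
    · rintro ⟨hj, hjk⟩
      exact ⟨hj.1, (hf.le_iff_le hj hk).1 hjk⟩
    · rintro ⟨h1, hjk⟩
      have hj : j ∈ Set.Icc 1 n := ⟨h1, hjk.trans hk.2⟩
      exact ⟨hj, (hf.le_iff_le hj hk).2 hjk⟩
  rw [this, Nat.card_Icc, Nat.add_sub_cancel]

theorem LF_eq_card_filter_toLex_le {α : Type*} [LinearOrder α] (L : ℕ → α) {n i : ℕ}
    (hi : i ≤ n) : LF L n i = #{j ∈ Icc 1 n | toLex (L j, j) ≤ toLex (L i, i)} := by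
  simp only [Prod.Lex.toLex_le_toLex, filter_or]
  rw [card_union_of_disjoint (disjoint_filter.2 fun j _ hlt heq => hlt.ne heq.1), LF, Cc, rankL]
  congr 2
  ext j
  simp only [mem_filter, mem_Icc]
  constructor
  · rintro ⟨⟨h1, hji⟩, hL⟩
    exact ⟨⟨h1, hji.trans hi⟩, hL, hji⟩
  · rintro ⟨⟨h1, _⟩, hL, hji⟩
    exact ⟨⟨h1, hji⟩, hL⟩

theorem suffix_eq_cons {α : Type*} (T : ℕ → α) {n p : ℕ} (hp : p ≤ n) :
    suffix T n p = T p :: suffix T n (p + 1) := by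
  rw [suffix, suffix, show n + 1 - p = (n + 1 - (p + 1)) + 1 by omega, List.range'_succ,
    List.map_cons]

theorem suffix_self {α : Type*} (T : ℕ → α) (n : ℕ) : suffix T n n = [T n] := by
  simp [suffix]

def cyclicPred (n p : ℕ) : ℕ := if p = 1 then n else p - 1

theorem bijOn_cyclicPred (n : ℕ) : Set.BijOn (cyclicPred n) (Set.Icc 1 n) (Set.Icc 1 n) := by
  refine ⟨fun p hp => ?_, fun p hp q hq h => ?_, fun r hr => ?_⟩
  · simp only [cyclicPred, Set.mem_Icc] at hp ⊢
    split <;> omega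
  · simp only [cyclicPred, Set.mem_Icc] at hp hq h
    split at h <;> split at h <;> omega
  · simp only [Set.mem_Icc] at hr
    by_cases hrn : r = n
    · exact ⟨1, ⟨le_rfl, by omega⟩, by simp [cyclicPred, hrn]⟩
    · exact ⟨r + 1, ⟨by omega, by omega⟩, by simp [cyclicPred]; omega⟩

theorem suffix_cyclicPred {α : Type*} (T : ℕ → α) {n p : ℕ} (hp : p ∈ Set.Icc 1 n) :
    suffix T n (cyclicPred n p) =
      (if p = 1 then T n else T (p - 1)) :: (if p = 1 then [] else suffix T n p) := by
  unfold cyclicPred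
  split_ifs with h
  · exact suffix_self T n
  · rw [suffix_eq_cons T (by have := hp.2; omega : p - 1 ≤ n), Nat.sub_add_cancel hp.1]

section BWT

variable {α : Type*} {n : ℕ} {T : ℕ → α} {SA : ℕ → ℕ} {L : ℕ → α}

theorem bwt_eq_last_iff [LinearOrder α] (hlast : ∀ i, 1 ≤ i → i < n → T n < T i)
    (hSA : Set.BijOn SA (Set.Icc 1 n) (Set.Icc 1 n))
    (hL : ∀ i, 1 ≤ i → i ≤ n → L i = if SA i = 1 then T n else T (SA i - 1))
    {j : ℕ} (hj : j ∈ Set.Icc 1 n) : L j = T n ↔ SA j = 1 := by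
  obtain ⟨h1, h2⟩ := hSA.mapsTo hj
  rw [hL j hj.1 hj.2]
  split_ifs with h
  · exact iff_of_true rfl h
  · exact iff_of_false (hlast _ (by omega) (by omega)).ne' h

theorem suffix_cyclicPred_SA (hSA : Set.BijOn SA (Set.Icc 1 n) (Set.Icc 1 n))
    (hL : ∀ i, 1 ≤ i → i ≤ n → L i = if SA i = 1 then T n else T (SA i - 1))
    {j : ℕ} (hj : j ∈ Set.Icc 1 n) :
    suffix T n (cyclicPred n (SA j)) = L j :: (if SA j = 1 then [] else suffix T n (SA j)) := by
  rw [suffix_cyclicPred T (hSA.mapsTo hj), hL j hj.1 hj.2]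

theorem suffix_cyclicPred_SA_le_iff [LinearOrder α] (hlast : ∀ i, 1 ≤ i → i < n → T n < T i)
    (hSA : Set.BijOn SA (Set.Icc 1 n) (Set.Icc 1 n))
    (hsorted : StrictMonoOn (fun j => suffix T n (SA j)) (Set.Icc 1 n))
    (hL : ∀ i, 1 ≤ i → i ≤ n → L i = if SA i = 1 then T n else T (SA i - 1))
    {i j : ℕ} (hi : i ∈ Set.Icc 1 n) (hj : j ∈ Set.Icc 1 n) :
    suffix T n (cyclicPred n (SA j)) ≤ suffix T n (cyclicPred n (SA i)) ↔
      toLex (L j, j) ≤ toLex (L i, i) := by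
  rw [suffix_cyclicPred_SA hSA hL hj, suffix_cyclicPred_SA hSA hL hi, List.cons_le_cons_iff',
    Prod.Lex.toLex_le_toLex]
  refine or_congr_right (and_congr_right fun hLji => ?_)
  have hSAji : SA j = 1 ↔ SA i = 1 := by
    rw [← bwt_eq_last_iff hlast hSA hL hj, ← bwt_eq_last_iff hlast hSA hL hi, hLji]
  by_cases h : SA j = 1
  · obtain rfl : j = i := hSA.injOn hj hi (h.trans (hSAji.1 h).symm)
    simp
  · rw [if_neg h, if_neg (hSAji.not.1 h)]
    exact hsorted.le_iff_le hj hi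

end BWT

theorem stmt0_general {α : Type*} [LinearOrder α] (n : ℕ)
    (T : ℕ → α) (SA : ℕ → ℕ) (L : ℕ → α)
    (hlast : ∀ i, 1 ≤ i → i < n → T n < T i)
    (hSAbij : Set.BijOn SA (Set.Icc 1 n) (Set.Icc 1 n))
    (hSAsorted : ∀ i j, 1 ≤ i → i < j → j ≤ n →
      List.Lex (· < ·) (suffix T n (SA i)) (suffix T n (SA j)))
    (hL : ∀ i, 1 ≤ i → i ≤ n → L i = if SA i = 1 then T n else T (SA i - 1)) :
    ∀ i, 1 ≤ i → i ≤ n →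
      (SA i ≠ 1 → SA (LF L n i) = SA i - 1) ∧
      (SA i = 1 → SA (LF L n i) = n) := by
  intro i hi1 hin
  have hi : i ∈ Set.Icc 1 n := ⟨hi1, hin⟩
  have hsorted : StrictMonoOn (fun j => suffix T n (SA j)) (Set.Icc 1 n) :=
    fun a ha b hb hab => hSAsorted a b ha.1 hab hb.2
  have hSA : Set.BijOn SA ↑(Icc 1 n) ↑(Icc 1 n) := by rwa [coe_Icc]
  obtain ⟨k, hk, hSAk⟩ := hSAbij.surjOn ((bijOn_cyclicPred n).mapsTo (hSAbij.mapsTo hi))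
  have hLF : LF L n i = k := calc
    LF L n i = #{j ∈ Icc 1 n | toLex (L j, j) ≤ toLex (L i, i)} :=
      LF_eq_card_filter_toLex_le L hin
    _ = #{j ∈ Icc 1 n | suffix T n (cyclicPred n (SA j)) ≤ suffix T n (SA k)} := by
      rw [hSAk]
      congr 1
      exact filter_congr fun j hj =>
        (suffix_cyclicPred_SA_le_iff hlast hSAbij hsorted hL hi (by simpa using hj)).symm
    _ = #{q ∈ Icc 1 n | suffix T n q ≤ suffix T n (SA k)} :=
      card_filter_comp_of_bijOn (σ := cyclicPred n ∘ SA)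
        (by rw [coe_Icc]; exact (bijOn_cyclicPred n).comp hSAbij)
        (fun q => suffix T n q ≤ suffix T n (SA k))
    _ = #{j ∈ Icc 1 n | suffix T n (SA j) ≤ suffix T n (SA k)} :=
      (card_filter_comp_of_bijOn hSA _).symm
    _ = k := card_filter_le_of_strictMonoOn hsorted hk
  rw [hLF, hSAk]
  exact ⟨fun h => if_neg h, fun h => if_pos h⟩

/-- For every `i ∈ [1..n]`: if `SA[i] ≠ 1` then `SA[LF(i)] = SA[i] − 1`, and if
`SA[i] = 1` then `SA[LF(i)] = n`. -/
theorem stmt0 {α : Type*} [LinearOrder α] (n : ℕ) (hn : 1 ≤ n)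
    (T : ℕ → α) (SA : ℕ → ℕ) (L : ℕ → α)
    (hlast : ∀ i, 1 ≤ i → i < n → T n < T i)
    (hSAbij : Set.BijOn SA (Set.Icc 1 n) (Set.Icc 1 n))
    (hSAsorted : ∀ i j, 1 ≤ i → i < j → j ≤ n →
      List.Lex (· < ·) (suffix T n (SA i)) (suffix T n (SA j)))
    (hL : ∀ i, 1 ≤ i → i ≤ n → L i = if SA i = 1 then T n else T (SA i - 1)) :
    ∀ i, 1 ≤ i → i ≤ n →
      (SA i ≠ 1 → SA (LF L n i) = SA i - 1) ∧
      (SA i = 1 → SA (LF L n i) = n) :=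
  stmt0_general n T SA L hlast hSAbij hSAsorted hL
end

section
/- The LF function is a bijection from [1..n] to [1..n]. -/
lemma lf_lemA {α : Type*} [LinearOrder α] (L : ℕ → α) (n : ℕ) :
    ∀ a b, a ∈ Set.Icc 1 n → b ∈ Set.Icc 1 n → L a < L b → LF L n a < LF L n b := by
  intro a b ha hb hab
  have h1 : rankL L (L a) a ≤ ((Finset.Icc 1 n).filter (fun j => L j = L a)).card :=
    Finset.card_le_card (Finset.monotone_filter_left _ (Finset.Icc_subset_Icc_right ha.2))
  have hsub : ((Finset.Icc 1 n).filter (fun j => L j < L a)) ∪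
      ((Finset.Icc 1 n).filter (fun j => L j = L a)) ⊆
      (Finset.Icc 1 n).filter (fun j => L j < L b) := by
    intro x hx
    rcases Finset.mem_union.mp hx with h | h <;>
      simp only [Finset.mem_filter] at h ⊢ <;>
      exact ⟨h.1, by rcases h with ⟨_, h2⟩; first | exact h2.trans hab | exact h2 ▸ hab⟩
  have hdisj : Disjoint ((Finset.Icc 1 n).filter (fun j => L j < L a))
      ((Finset.Icc 1 n).filter (fun j => L j = L a)) := by
    rw [Finset.disjoint_left]
    intro x hx hy
    simp only [Finset.mem_filter] at hx hy
    exact absurd hy.2 (ne_of_lt hx.2)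
  have h2 : Cc L n (L a) + ((Finset.Icc 1 n).filter (fun j => L j = L a)).card ≤ Cc L n (L b) := by
    have := Finset.card_le_card hsub
    rwa [Finset.card_union_of_disjoint hdisj] at this
  have h3 : 1 ≤ rankL L (L b) b := Finset.card_pos.mpr
    ⟨b, Finset.mem_filter.mpr ⟨Finset.mem_Icc.mpr ⟨hb.1, le_rfl⟩, rfl⟩⟩
  unfold LF
  omega

/-- The LF function is a bijection from `[1..n]` to `[1..n]`. -/
theorem stmt1 {α : Type*} [LinearOrder α] (n : ℕ) (hn : 1 ≤ n)
    (T : ℕ → α) (SA : ℕ → ℕ) (L : ℕ → α)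
    (hlast : ∀ i, 1 ≤ i → i < n → T n < T i)
    (hSAbij : Set.BijOn SA (Set.Icc 1 n) (Set.Icc 1 n))
    (hSAsorted : ∀ i j, 1 ≤ i → i < j → j ≤ n →
      List.Lex (· < ·) (suffix T n (SA i)) (suffix T n (SA j)))
    (hL : ∀ i, 1 ≤ i → i ≤ n → L i = if SA i = 1 then T n else T (SA i - 1)) :
    Set.BijOn (LF L n) (Set.Icc 1 n) (Set.Icc 1 n) := by
  classical
  have hB : ∀ a b, 1 ≤ a → a < b → L a = L b → LF L n a < LF L n b := by
    intro a b ha hab he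
    have hr : rankL L (L b) a < rankL L (L b) b := by
      apply Finset.card_lt_card
      rw [Finset.ssubset_iff_of_subset
        (Finset.monotone_filter_left _ (Finset.Icc_subset_Icc_right hab.le))]
      refine ⟨b, Finset.mem_filter.mpr ⟨Finset.mem_Icc.mpr ⟨by omega, le_rfl⟩, rfl⟩, ?_⟩
      intro hmem
      have := (Finset.mem_Icc.mp (Finset.mem_filter.mp hmem).1).2
      omega
    unfold LF
    rw [he]
    omega
  have hmaps : Set.MapsTo (LF L n) (Set.Icc 1 n) (Set.Icc 1 n) := by
    intro i hi
    obtain ⟨hi1, hin⟩ := hi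
    have h1 : 1 ≤ rankL L (L i) i := Finset.card_pos.mpr
      ⟨i, Finset.mem_filter.mpr ⟨Finset.mem_Icc.mpr ⟨hi1, le_rfl⟩, rfl⟩⟩
    have h2 : rankL L (L i) i ≤ ((Finset.Icc 1 n).filter (fun j => L j = L i)).card :=
      Finset.card_le_card (Finset.monotone_filter_left _ (Finset.Icc_subset_Icc_right hin))
    have hdisj : Disjoint ((Finset.Icc 1 n).filter (fun j => L j < L i))
        ((Finset.Icc 1 n).filter (fun j => L j = L i)) := by
      rw [Finset.disjoint_left]
      intro x hx hy
      simp only [Finset.mem_filter] at hx hy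
      exact absurd hy.2 (ne_of_lt hx.2)
    have h3 : Cc L n (L i) + ((Finset.Icc 1 n).filter (fun j => L j = L i)).card ≤ n := by
      have := Finset.card_le_card (Finset.union_subset (Finset.filter_subset _ _)
        (Finset.filter_subset _ _) :
        ((Finset.Icc 1 n).filter (fun j => L j < L i)) ∪
          ((Finset.Icc 1 n).filter (fun j => L j = L i)) ⊆ Finset.Icc 1 n)
      rw [Finset.card_union_of_disjoint hdisj, Nat.card_Icc] at this
      unfold Cc
      omega
    constructor
    · unfold LF; omega
    · unfold LF; omega
  have hinj : Set.InjOn (LF L n) (Set.Icc 1 n) := by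
    intro i hi j hj heq
    by_contra hne
    rcases lt_trichotomy (L i) (L j) with h | h | h
    · exact absurd heq (ne_of_lt (lf_lemA L n i j hi hj h))
    · rcases lt_trichotomy i j with h' | h' | h'
      · exact absurd heq (ne_of_lt (hB i j hi.1 h' h))
      · exact hne h'
      · exact absurd heq.symm (ne_of_lt (hB j i hj.1 h' h.symm))
    · exact absurd heq.symm (ne_of_lt (lf_lemA L n j i hj hi h))
  exact ((Set.finite_Icc 1 n).injOn_iff_bijOn_of_mapsTo hmaps).mp hinj
end

section
/- For all 1 ≤ i < j ≤ n with L[i] = L[j], LF(i) < LF(j). Moreover, if L[m] = L[i] for every m ∈ [i..j] (i.e., positions i through j lie in a single run of equal characters of L), then LF(i + t) = LF(i) + t for every 0 ≤ t ≤ j − i; hence the characters of every run of L occur contiguously in the first column F of the sorted rotations. -/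
lemma rankL_succ {α : Type*} [DecidableEq α] (L : ℕ → α) (c : α) (m : ℕ) :
    rankL L c (m + 1) = rankL L c m + (if L (m+1) = c then 1 else 0) := by
  unfold rankL
  rw [show Finset.Icc 1 (m+1) = insert (m+1) (Finset.Icc 1 m) by ext x; simp; omega,
    Finset.filter_insert]
  split
  · rw [Finset.card_insert_of_notMem (by simp)]
  · simp

lemma rankL_mono {α : Type*} [DecidableEq α] (L : ℕ → α) (c : α) {i j : ℕ} (h : i ≤ j) :
    rankL L c i ≤ rankL L c j :=
  Finset.card_le_card (Finset.filter_subset_filter _ (Finset.Icc_subset_Icc_right h))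

/-- For all `1 ≤ i < j ≤ n` with `L[i] = L[j]`, `LF(i) < LF(j)`.  Moreover, if
`L[m] = L[i]` for every `m ∈ [i..j]` (positions `i` through `j` lie in a single
run of equal characters of `L`), then `LF(i + t) = LF(i) + t` for every
`0 ≤ t ≤ j − i`. -/
theorem stmt2 {α : Type*} [LinearOrder α] (n : ℕ) (hn : 1 ≤ n)
    (T : ℕ → α) (SA : ℕ → ℕ) (L : ℕ → α)
    (hlast : ∀ i, 1 ≤ i → i < n → T n < T i)
    (hSAbij : Set.BijOn SA (Set.Icc 1 n) (Set.Icc 1 n))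
    (hSAsorted : ∀ i j, 1 ≤ i → i < j → j ≤ n →
      List.Lex (· < ·) (suffix T n (SA i)) (suffix T n (SA j)))
    (hL : ∀ i, 1 ≤ i → i ≤ n → L i = if SA i = 1 then T n else T (SA i - 1)) :
    (∀ i j, 1 ≤ i → i < j → j ≤ n → L i = L j → LF L n i < LF L n j) ∧
    (∀ i j, 1 ≤ i → i ≤ j → j ≤ n → (∀ m, i ≤ m → m ≤ j → L m = L i) →
      ∀ t, t ≤ j - i → LF L n (i + t) = LF L n i + t) := by
  constructor
  · intro i j hi hij hjn hLij
    unfold LF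
    rw [← hLij]
    have hrank : rankL L (L i) i < rankL L (L i) j := by
      have hj : j = (j - 1) + 1 := by omega
      rw [hj, rankL_succ]
      have : L (j - 1 + 1) = L i := by rw [← hj, ← hLij]
      rw [this, if_pos rfl]
      have := rankL_mono L (L i) (show i ≤ j - 1 by omega)
      omega
    omega
  · intro i j hi hij hjn hrun t ht
    have hrank : ∀ s, s ≤ j - i → rankL L (L i) (i + s) = rankL L (L i) i + s := by
      intro s hs
      induction s with
      | zero => simp
      | succ k ih =>
        rw [show i + (k + 1) = (i + k) + 1 by omega, rankL_succ,
          hrun (i + k + 1) (by omega) (by omega), if_pos rfl, ih (by omega)]; omega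
    have hLt : L (i + t) = L i := hrun (i + t) (by omega) (by omega)
    unfold LF
    rw [hLt, hrank t ht]
    omega
end

section
/- For every character c, if the SA interval I(c) of the one-character string c equals a nonempty interval [b..e], then case (A) does not hold for [b..e]; consequently, whenever case (A) holds for the SA interval of a substring P of T, the length of P is at least 2. -/
/-- The SA interval of a nonempty string `Y`:
`I(Y) = {i ∈ [1..n] : Y is a prefix of T[SA[i]..]}`. -/
def SAIv {α : Type*} (T : ℕ → α) (SA : ℕ → ℕ) (n : ℕ) (Y : List α) : Set ℕ :=
  {i | 1 ≤ i ∧ i ≤ n ∧ Y <+: suffix T n (SA i)}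

/-- The substring `T[x..x+l-1]` of a 1-indexed string, as a list. -/
def substr {α : Type*} (T : ℕ → α) (x l : ℕ) : List α :=
  (List.range' x l).map T

/-- Case (A) holds for an interval `[b..e]` if there exists `i ∈ [1..r]` with
`Z[i] < b` and `e < Z[i+1] − 1`. -/
def CaseA (Z : ℕ → ℕ) (r b e : ℕ) : Prop :=
  ∃ i, 1 ≤ i ∧ i ≤ r ∧ Z i < b ∧ e < Z (i + 1) - 1

open Finset

section LF

variable {α : Type*} [LinearOrder α] (L : ℕ → α) (n : ℕ)

theorem rankL_mono_s7 (c : α) : Monotone (rankL L c) := fun _ _ h =>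
  card_le_card (filter_subset_filter _ (Icc_subset_Icc_right h))

theorem rankL_succ_of_eq {c : α} {j : ℕ} (h : L (j + 1) = c) :
    rankL L c (j + 1) = rankL L c j + 1 := by
  rw [rankL, ← insert_Icc_right_eq_Icc_add_one (by omega), filter_insert, if_pos h,
    card_insert_of_notMem (by simp), rankL]

theorem one_le_rankL_self {j : ℕ} (hj : 1 ≤ j) : 1 ≤ rankL L (L j) j := by
  obtain ⟨k, rfl⟩ := Nat.exists_eq_add_of_le' hj
  rw [rankL_succ_of_eq L rfl]
  omega

theorem rankL_lt_of_lt {c : α} {j j' : ℕ} (hjj' : j < j') (h : L j' = c) :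
    rankL L c j < rankL L c j' := by
  obtain ⟨k, rfl⟩ := Nat.exists_eq_add_of_lt hjj'
  rw [rankL_succ_of_eq L h]
  exact Nat.lt_succ_of_le (rankL_mono_s7 L c (by omega))

theorem card_filter_le_eq_Cc_add_rankL (c : α) :
    #{j ∈ Icc 1 n | L j ≤ c} = Cc L n c + rankL L c n := by
  rw [Cc, rankL, ← card_union_of_disjoint (disjoint_filter.2 fun _ _ h => h.ne), ← filter_or]
  simp_rw [le_iff_lt_or_eq]

theorem Cc_add_rankL_le_Cc {c c' : α} (h : c < c') : Cc L n c + rankL L c n ≤ Cc L n c' := by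
  rw [← card_filter_le_eq_Cc_add_rankL, Cc]
  exact card_le_card (monotone_filter_right _ fun _ _ hj => hj.trans_lt h)

theorem LF_le_Cc_add_rankL {j : ℕ} (hj : j ≤ n) : LF L n j ≤ Cc L n (L j) + rankL L (L j) n :=
  Nat.add_le_add_left (rankL_mono_s7 L _ hj) _

theorem LF_mem_Icc {j : ℕ} (hj : j ∈ Set.Icc 1 n) : LF L n j ∈ Set.Icc 1 n := by
  refine ⟨(one_le_rankL_self L hj.1).trans (Nat.le_add_left _ _), ?_⟩
  calc LF L n j ≤ Cc L n (L j) + rankL L (L j) n := LF_le_Cc_add_rankL L n hj.2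
    _ = #{i ∈ Icc 1 n | L i ≤ L j} := (card_filter_le_eq_Cc_add_rankL L n _).symm
    _ ≤ n := (card_filter_le _ _).trans (by simp)

theorem LF_lt_LF_of_lt {j j' : ℕ} (hj : j ≤ n) (hj' : 1 ≤ j') (h : L j < L j') :
    LF L n j < LF L n j' :=
  calc LF L n j ≤ Cc L n (L j) + rankL L (L j) n := LF_le_Cc_add_rankL L n hj
    _ ≤ Cc L n (L j') := Cc_add_rankL_le_Cc L n h
    _ < LF L n j' := Nat.lt_add_of_pos_right (one_le_rankL_self L hj')

theorem LF_lt_LF_of_eq {j j' : ℕ} (hjj' : j < j') (h : L j = L j') : LF L n j < LF L n j' := by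
  unfold LF
  rw [h]
  exact Nat.add_lt_add_left (rankL_lt_of_lt L hjj' rfl) _

theorem LF_le_LF_of_eq {j j' : ℕ} (hjj' : j ≤ j') (h : L j = L j') :
    LF L n j ≤ LF L n j' := by
  rcases hjj'.eq_or_lt with rfl | hlt
  · rfl
  · exact (LF_lt_LF_of_eq L n hlt h).le

theorem LF_injOn : Set.InjOn (LF L n) (Set.Icc 1 n) := by
  have key : ∀ j ∈ Set.Icc 1 n, ∀ j' ∈ Set.Icc 1 n, j < j' → LF L n j ≠ LF L n j' := by
    intro j hj j' hj' hlt
    rcases lt_trichotomy (L j) (L j') with h | h | h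
    · exact (LF_lt_LF_of_lt L n hj.2 hj'.1 h).ne
    · exact (LF_lt_LF_of_eq L n hlt h).ne
    · exact (LF_lt_LF_of_lt L n hj'.2 hj.1 h).ne'
  intro j hj j' hj' heq
  by_contra hne
  rcases Nat.lt_or_gt_of_ne hne with hlt | hlt
  · exact key j hj j' hj' hlt heq
  · exact key j' hj' j hj hlt heq.symm

theorem LF_bijOn : Set.BijOn (LF L n) (Set.Icc 1 n) (Set.Icc 1 n) :=
  ((Set.finite_Icc 1 n).injOn_iff_bijOn_of_mapsTo fun _ => LF_mem_Icc L n).1 (LF_injOn L n)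

end LF

theorem card_filter_eq_of_bijOn {β γ : Type*} {s : Finset β} {σ : β → β} {f g : β → γ}
    (hσ : Set.BijOn σ s s) (hg : ∀ x ∈ s, g x = f (σ x)) (q : γ → Prop)
    [DecidablePred q] :
    #{x ∈ s | q (g x)} = #{x ∈ s | q (f x)} := by
  rw [filter_congr fun x hx => by rw [hg x hx]]
  refine card_nbij σ (fun x hx => ?_) (hσ.injOn.mono fun x hx => (mem_filter.1 hx).1)
    fun y hy => ?_
  · simp only [coe_filter, Set.mem_ofPred_eq] at hx ⊢
    exact ⟨hσ.mapsTo hx.1, hx.2⟩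
  · simp only [coe_filter, Set.mem_ofPred_eq] at hy
    obtain ⟨x, hx, rfl⟩ := hσ.surjOn hy.1
    exact ⟨x, by simpa using ⟨hx, hy.2⟩, rfl⟩

theorem apply_LF_eq_of_monotoneOn {α : Type*} [LinearOrder α] {n : ℕ} {T F L : ℕ → α}
    {σ τ : ℕ → ℕ} (hF : MonotoneOn F (Set.Icc 1 n))
    (hσ : Set.BijOn σ (Set.Icc 1 n) (Set.Icc 1 n))
    (hτ : Set.BijOn τ (Set.Icc 1 n) (Set.Icc 1 n))
    (hL : ∀ j ∈ Set.Icc 1 n, L j = T (σ j)) (hFT : ∀ i ∈ Set.Icc 1 n, F i = T (τ i))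
    {j : ℕ} (hj : j ∈ Set.Icc 1 n) : F (LF L n j) = L j := by
  have hσ' : Set.BijOn σ (Icc 1 n : Finset ℕ) (Icc 1 n) := by simpa using hσ
  have hτ' : Set.BijOn τ (Icc 1 n : Finset ℕ) (Icc 1 n) := by simpa using hτ
  have hcount : ∀ (q : α → Prop) [DecidablePred q],
      #{i ∈ Icc 1 n | q (F i)} = #{i ∈ Icc 1 n | q (L i)} := fun q _ => by
    rw [card_filter_eq_of_bijOn hτ' (by simpa using hFT) q,
      ← card_filter_eq_of_bijOn hσ' (by simpa using hL) q]
  set k := LF L n j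
  have hk : k ∈ Set.Icc 1 n := LF_mem_Icc L n hj
  rcases lt_trichotomy (F k) (L j) with hlt | heq | hgt
  · have hsub : Icc 1 k ⊆ {i ∈ Icc 1 n | F i < L j} := fun i hi => by
      simp only [mem_Icc, mem_filter] at hi ⊢
      exact ⟨⟨hi.1, hi.2.trans hk.2⟩, (hF ⟨hi.1, hi.2.trans hk.2⟩ hk hi.2).trans_lt hlt⟩
    have := card_le_card hsub
    rw [hcount (· < L j), ← Cc, Nat.card_Icc] at this
    have : Cc L n (L j) < k := Nat.lt_add_of_pos_right (one_le_rankL_self L hj.1)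
    omega
  · exact heq
  · have hsub : {i ∈ Icc 1 n | F i ≤ L j} ⊆ Icc 1 (k - 1) := fun i hi => by
      simp only [mem_Icc, mem_filter] at hi ⊢
      refine ⟨hi.1.1, Nat.le_sub_one_of_lt (lt_of_not_ge fun hki => ?_)⟩
      exact (hF hk hi.1 hki).not_gt (hi.2.trans_lt hgt)
    have := card_le_card hsub
    rw [hcount (· ≤ L j), card_filter_le_eq_Cc_add_rankL, Nat.card_Icc] at this
    have : k ≤ Cc L n (L j) + rankL L (L j) n := LF_le_Cc_add_rankL L n hj.2
    have : 1 ≤ k := hk.1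
    omega

theorem exists_apply_le_lt_apply_succ {p : ℕ → ℕ} {a b j : ℕ} (hab : a ≤ b)
    (ha : p a ≤ j) (hb : j < p b) : ∃ m, a ≤ m ∧ m < b ∧ p m ≤ j ∧ j < p (m + 1) := by
  induction b, hab using Nat.le_induction with
  | base => omega
  | succ b hab ih =>
    by_cases hpb : p b ≤ j
    · exact ⟨b, hab, b.lt_succ_self, hpb, hb⟩
    · obtain ⟨m, ham, hmb, hm⟩ := ih (lt_of_not_ge hpb)
      exact ⟨m, ham, hmb.trans b.lt_succ_self, hm⟩

section Runs

variable {α : Type*} {n r : ℕ} {p : ℕ → ℕ}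

theorem run_start_mem_Icc {len : ℕ → ℕ} (hp1 : p 1 = 1) (hpend : p (r + 1) = n + 1)
    (hpsucc : ∀ m, 1 ≤ m → m ≤ r → p (m + 1) = p m + len m)
    (hlen : ∀ m, 1 ≤ m → m ≤ r → 1 ≤ len m) :
    Set.MapsTo p (Set.Icc 1 r) (Set.Icc 1 n) := by
  have hmono : StrictMonoOn p (Set.Icc 1 (r + 1)) :=
    strictMonoOn_of_lt_succ Set.ordConnected_Icc fun m _ hm hm' => by
      rw [Order.succ_eq_add_one] at hm' ⊢
      rw [hpsucc m hm.1 (by simpa using hm'.2)]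
      have := hlen m hm.1 (by simpa using hm'.2)
      omega
  rintro m ⟨hm1, hmr⟩
  have h1 : p 1 ≤ p m := hmono.monotoneOn ⟨le_rfl, by omega⟩ ⟨hm1, by omega⟩ hm1
  have h2 : p m < p (r + 1) := hmono ⟨hm1, by omega⟩ ⟨by omega, le_rfl⟩ (by omega)
  exact ⟨hp1 ▸ h1, by omega⟩

theorem exists_run_start_le {L : ℕ → α} (hp1 : p 1 = 1) (hpend : p (r + 1) = n + 1)
    (hrunconst :
      ∀ m, 1 ≤ m → m ≤ r → ∀ j, p m ≤ j → j < p (m + 1) → L j = L (p m))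
    {j : ℕ} (hj : j ∈ Set.Icc 1 n) : ∃ m ∈ Set.Icc 1 r, p m ≤ j ∧ L (p m) = L j := by
  obtain ⟨m, hm1, hmr, hmj, hjm⟩ :=
    exists_apply_le_lt_apply_succ (by omega : 1 ≤ r + 1) (hp1 ▸ hj.1)
      (hpend ▸ Nat.lt_succ_of_le hj.2)
  exact ⟨m, ⟨hm1, by omega⟩, hmj, (hrunconst m hm1 (by omega) j hmj hjm).symm⟩

end Runs

theorem exists_le_apply_eq_of_run_start {α : Type*} [LinearOrder α] {n r : ℕ} {F L : ℕ → α}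
    {p X Z : ℕ → ℕ} (hFL : ∀ j ∈ Set.Icc 1 n, F (LF L n j) = L j)
    (hrun : ∀ j ∈ Set.Icc 1 n, ∃ m ∈ Set.Icc 1 r, p m ≤ j ∧ L (p m) = L j)
    (hp : Set.MapsTo p (Set.Icc 1 r) (Set.Icc 1 n))
    (hX : Set.SurjOn X (Set.Icc 1 r) (Set.Icc 1 r))
    (hZ : ∀ i ∈ Set.Icc 1 r, Z i = LF L n (p (X i))) :
    ∀ k ∈ Set.Icc 1 n, ∃ i ∈ Set.Icc 1 r, Z i ≤ k ∧ F (Z i) = F k := by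
  intro k hk
  obtain ⟨j, hj, rfl⟩ := (LF_bijOn L n).surjOn hk
  obtain ⟨m, hm, hmj, hLm⟩ := hrun j hj
  obtain ⟨i, hi, rfl⟩ := hX hm
  refine ⟨i, hi, ?_, ?_⟩
  · rw [hZ i hi]
    exact LF_le_LF_of_eq L n hmj hLm
  · rw [hZ i hi, hFL _ (hp hm), hFL j hj, hLm]

theorem not_caseA_of_exists_le_apply_eq {α : Type*} [PartialOrder α] {n r b e : ℕ} {c : α}
    {F : ℕ → α} {Z : ℕ → ℕ} (hF : MonotoneOn F (Set.Icc 1 n))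
    (hZ : MonotoneOn Z (Set.Icc 1 r))
    (hZmem : Set.MapsTo Z (Set.Icc 1 r) (Set.Icc 1 n)) (hZend : Z (r + 1) = n + 1)
    (hcover : ∀ k ∈ Set.Icc 1 n, ∃ i ∈ Set.Icc 1 r, Z i ≤ k ∧ F (Z i) = F k)
    (hI : {k ∈ Set.Icc 1 n | F k = c} = Set.Icc b e) (hbe : b ≤ e) : ¬ CaseA Z r b e := by
  rintro ⟨i, hi1, hir, hZb, heZ⟩
  have hb : b ∈ {k ∈ Set.Icc 1 n | F k = c} := hI ▸ ⟨le_rfl, hbe⟩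
  have he : e ∈ {k ∈ Set.Icc 1 n | F k = c} := hI ▸ ⟨hbe, le_rfl⟩
  have hZsucc : Z (i + 1) ≤ n + 1 := by
    rcases hir.eq_or_lt with rfl | hlt
    · exact hZend.le
    · exact (hZmem ⟨by omega, hlt⟩).2.trans n.le_succ
  have hk : e + 1 ∈ Set.Icc 1 n := ⟨by omega, by omega⟩
  obtain ⟨i', hi', hZk, hFZ⟩ := hcover (e + 1) hk
  have hi'i : i' ≤ i := by
    by_contra! hlt
    have : Z (i + 1) ≤ Z i' := hZ ⟨by omega, hlt.trans_le hi'.2⟩ hi' hlt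
    omega
  have hZ'b : Z i' ≤ b := (hZ hi' ⟨hi1, hir⟩ hi'i).trans hZb.le
  have hFb : F (e + 1) = c := le_antisymm
    (hFZ ▸ hb.2 ▸ hF (hZmem hi') hb.1 hZ'b) (he.2 ▸ hF he.1 hk (by omega))
  have : e + 1 ∈ Set.Icc b e := hI ▸ ⟨hk, hFb⟩
  exact absurd this.2 (by omega)

section SuffixArray

variable {α : Type*} {T : ℕ → α} {n : ℕ}

theorem suffix_eq_cons_s7 {k : ℕ} (hk : k ≤ n) : suffix T n k = T k :: suffix T n (k + 1) := by
  rw [suffix, suffix, show n + 1 - k = n + 1 - (k + 1) + 1 by omega, List.range'_succ,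
    List.map_cons]

theorem singleton_prefix_suffix_iff {k : ℕ} {c : α} (hk : k ≤ n) :
    [c] <+: suffix T n k ↔ T k = c := by
  simp [suffix_eq_cons_s7 hk, List.cons_prefix_cons, eq_comm]

theorem SAIv_singleton {SA : ℕ → ℕ} (hSA : Set.MapsTo SA (Set.Icc 1 n) (Set.Icc 1 n))
    (c : α) :
    SAIv T SA n [c] = {k ∈ Set.Icc 1 n | T (SA k) = c} := by
  ext k
  simp only [SAIv, Set.mem_ofPred_eq, Set.mem_Icc, and_assoc]
  refine and_congr_right fun hk1 => and_congr_right fun hkn => ?_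
  exact singleton_prefix_suffix_iff (hSA ⟨hk1, hkn⟩).2

theorem monotoneOn_head_of_lex_sorted [LinearOrder α] {SA : ℕ → ℕ}
    (hSA : Set.MapsTo SA (Set.Icc 1 n) (Set.Icc 1 n))
    (hsorted : ∀ i j, 1 ≤ i → i < j → j ≤ n →
      List.Lex (· < ·) (suffix T n (SA i)) (suffix T n (SA j))) :
    MonotoneOn (fun i => T (SA i)) (Set.Icc 1 n) := by
  intro i hi j hj hij
  rcases hij.eq_or_lt with rfl | hlt
  · rfl
  · have := hsorted i j hi.1 hlt hj.2
    rw [suffix_eq_cons_s7 (hSA hi).2, suffix_eq_cons_s7 (hSA hj).2] at this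
    exact List.head_le_of_lt this

end SuffixArray

theorem bijOn_cyclic_pred (n : ℕ) :
    Set.BijOn (fun k => if k = 1 then n else k - 1) (Set.Icc 1 n) (Set.Icc 1 n) := by
  refine ((Set.finite_Icc 1 n).injOn_iff_bijOn_of_mapsTo fun k hk => ?_).1 fun a ha b hb h => ?_
  · simp only [Set.mem_Icc] at hk ⊢
    split_ifs <;> omega
  · simp only [Set.mem_Icc] at ha hb
    split_ifs at h <;> omega

theorem stmt7_general {α : Type*} [LinearOrder α] (n : ℕ)
    (T : ℕ → α) (SA : ℕ → ℕ) (L : ℕ → α)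
    (hSAbij : Set.BijOn SA (Set.Icc 1 n) (Set.Icc 1 n))
    (hSAsorted : ∀ i j, 1 ≤ i → i < j → j ≤ n →
      List.Lex (· < ·) (suffix T n (SA i)) (suffix T n (SA j)))
    (hL : ∀ i, 1 ≤ i → i ≤ n → L i = if SA i = 1 then T n else T (SA i - 1))
    -- the run-length encoding `L_1, …, L_r` of `L`: run `L_m` starts at `p m`
    -- and has length `len m`
    (r : ℕ) (p len : ℕ → ℕ)
    (hp1 : p 1 = 1) (hpend : p (r + 1) = n + 1)
    (hpsucc : ∀ m, 1 ≤ m → m ≤ r → p (m + 1) = p m + len m)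
    (hlen : ∀ m, 1 ≤ m → m ≤ r → 1 ≤ len m)
    (hrunconst : ∀ m, 1 ≤ m → m ≤ r → ∀ j, p m ≤ j → j < p (m + 1) → L j = L (p m))
    -- `X` is the permutation of `[1..r]` sorting the runs by `LF(p(·))`
    (X : ℕ → ℕ)
    (hXbij : Set.BijOn X (Set.Icc 1 r) (Set.Icc 1 r))
    (hXsorted : ∀ i j, 1 ≤ i → i < j → j ≤ r → LF L n (p (X i)) < LF L n (p (X j)))
    -- `Z[i] = LF(p(X[i]))` for `i ∈ [1..r]`, and `Z[r+1] = n+1`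
    (Z : ℕ → ℕ)
    (hZ : ∀ i, 1 ≤ i → i ≤ r → Z i = LF L n (p (X i)))
    (hZend : Z (r + 1) = n + 1)
    :
    (∀ (c : α) (b e : ℕ), SAIv T SA n [c] = Set.Icc b e → b ≤ e →
      ¬ CaseA Z r b e) ∧
    (∀ (P : List α) (x b e : ℕ), P ≠ [] → 1 ≤ x → x + P.length ≤ n + 1 →
      P = substr T x P.length → SAIv T SA n P = Set.Icc b e → b ≤ e →
      CaseA Z r b e → 2 ≤ P.length) := by
  have hF := monotoneOn_head_of_lex_sorted hSAbij.mapsTo hSAsorted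
  have hp := run_start_mem_Icc hp1 hpend hpsucc hlen
  have hFL : ∀ j ∈ Set.Icc 1 n, T (SA (LF L n j)) = L j :=
    fun j => apply_LF_eq_of_monotoneOn hF ((bijOn_cyclic_pred n).comp hSAbij) hSAbij
      (fun j hj => (hL j hj.1 hj.2).trans (apply_ite T _ _ _).symm) (fun _ _ => rfl)
  have hZmem : Set.MapsTo Z (Set.Icc 1 r) (Set.Icc 1 n) := fun i hi =>
    hZ i hi.1 hi.2 ▸ LF_mem_Icc L n (hp (hXbij.mapsTo hi))
  have hZmono : MonotoneOn Z (Set.Icc 1 r) := fun i hi j hj hij => by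
    rcases hij.eq_or_lt with rfl | hlt
    · rfl
    · rw [hZ i hi.1 hi.2, hZ j hj.1 hj.2]
      exact (hXsorted i j hi.1 hlt hj.2).le
  have hcover := exists_le_apply_eq_of_run_start (F := fun i => T (SA i)) hFL
    (fun j => exists_run_start_le hp1 hpend hrunconst) hp hXbij.surjOn fun i hi => hZ i hi.1 hi.2
  have hsingle : ∀ (c : α) (b e : ℕ), SAIv T SA n [c] = Set.Icc b e → b ≤ e →
      ¬ CaseA Z r b e := fun c b e hI =>
    not_caseA_of_exists_le_apply_eq hF hZmono hZmem hZend hcover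
      (SAIv_singleton hSAbij.mapsTo c ▸ hI)
  refine ⟨hsingle, fun P x b e hP _ _ _ hI hbe hA => ?_⟩
  by_contra! hshort
  obtain ⟨c, rfl⟩ : ∃ c, P = [c] :=
    List.length_eq_one_iff.1 (by have := List.length_pos_iff.2 hP; omega)
  exact hsingle c b e hI hbe hA

/-- For every character `c`, if the SA interval of the one-character string `c`
equals a nonempty interval `[b..e]`, then case (A) does not hold for `[b..e]`;
consequently, whenever case (A) holds for the SA interval of a substring `P` of
`T`, the length of `P` is at least `2`. -/
theorem stmt7 {α : Type*} [LinearOrder α] (n : ℕ) (hn : 1 ≤ n)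
    (T : ℕ → α) (SA : ℕ → ℕ) (L : ℕ → α)
    (hlast : ∀ i, 1 ≤ i → i < n → T n < T i)
    (hSAbij : Set.BijOn SA (Set.Icc 1 n) (Set.Icc 1 n))
    (hSAsorted : ∀ i j, 1 ≤ i → i < j → j ≤ n →
      List.Lex (· < ·) (suffix T n (SA i)) (suffix T n (SA j)))
    (hL : ∀ i, 1 ≤ i → i ≤ n → L i = if SA i = 1 then T n else T (SA i - 1))
    -- the run-length encoding `L_1, …, L_r` of `L`: run `L_m` starts at `p m`
    -- and has length `len m`
    (r : ℕ) (p len : ℕ → ℕ) (hr : 1 ≤ r)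
    (hp1 : p 1 = 1) (hpend : p (r + 1) = n + 1)
    (hpsucc : ∀ m, 1 ≤ m → m ≤ r → p (m + 1) = p m + len m)
    (hlen : ∀ m, 1 ≤ m → m ≤ r → 1 ≤ len m)
    (hrunconst : ∀ m, 1 ≤ m → m ≤ r → ∀ j, p m ≤ j → j < p (m + 1) → L j = L (p m))
    (hrunmax : ∀ m, 1 ≤ m → m < r → L (p m) ≠ L (p (m + 1)))
    -- `X` is the permutation of `[1..r]` sorting the runs by `LF(p(·))`
    (X : ℕ → ℕ)
    (hXbij : Set.BijOn X (Set.Icc 1 r) (Set.Icc 1 r))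
    (hXsorted : ∀ i j, 1 ≤ i → i < j → j ≤ r → LF L n (p (X i)) < LF L n (p (X j)))
    -- `Z[i] = LF(p(X[i]))` for `i ∈ [1..r]`, and `Z[r+1] = n+1`
    (Z : ℕ → ℕ)
    (hZ : ∀ i, 1 ≤ i → i ≤ r → Z i = LF L n (p (X i)))
    (hZend : Z (r + 1) = n + 1)
    :
    (∀ (c : α) (b e : ℕ), SAIv T SA n [c] = Set.Icc b e → b ≤ e →
      ¬ CaseA Z r b e) ∧
    (∀ (P : List α) (x b e : ℕ), P ≠ [] → 1 ≤ x → x + P.length ≤ n + 1 →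
      P = substr T x P.length → SAIv T SA n P = Set.Icc b e → b ≤ e →
      CaseA Z r b e → 2 ≤ P.length) :=
  stmt7_general n T SA L hSAbij hSAsorted hL r p len hp1 hpend hpsucc hlen hrunconst X hXbij
    hXsorted Z hZ hZend
end

section
/- Let [b..e] ⊆ [1..n] be an interval for which case (B) holds and let k ∈ [1..n]. Then there exists j ∈ [b..e] with SA[j] ≥ k if and only if T_k ∩ [b..e] ≠ ∅; moreover, every j ∈ T_k ∩ [b..e] satisfies SA[j] ≥ k. -/
/-- `open(i,k) = min({n+1} ∪ {j ∈ [Z[i], Z[i+1]−1] : SA[j] ≥ k})`. -/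
noncomputable def openPos (SA Z : ℕ → ℕ) (n i k : ℕ) : ℕ :=
  sInf ({n + 1} ∪ {j | Z i ≤ j ∧ j ≤ Z (i + 1) - 1 ∧ k ≤ SA j})

/-- `close(i,k) = max({0} ∪ {j ∈ [Z[i], Z[i+1]−1] : SA[j] ≥ k})`. -/
noncomputable def closePos (SA Z : ℕ → ℕ) (i k : ℕ) : ℕ :=
  sSup ({0} ∪ {j | Z i ≤ j ∧ j ≤ Z (i + 1) - 1 ∧ k ≤ SA j})

lemma open_mem (SA Z : ℕ → ℕ) (n i k : ℕ) (h : openPos SA Z n i k ≤ n) :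
    Z i ≤ openPos SA Z n i k ∧ openPos SA Z n i k ≤ Z (i + 1) - 1 ∧
      k ≤ SA (openPos SA Z n i k) := by
  have hne : ({n + 1} ∪ {j | Z i ≤ j ∧ j ≤ Z (i + 1) - 1 ∧ k ≤ SA j} : Set ℕ).Nonempty :=
    ⟨n + 1, Or.inl rfl⟩
  have hmem := Nat.sInf_mem hne
  rcases hmem with h1 | h2
  · exfalso
    have : openPos SA Z n i k = n + 1 := h1
    omega
  · exact h2

lemma open_le (SA Z : ℕ → ℕ) (n i k j : ℕ)
    (hj : Z i ≤ j ∧ j ≤ Z (i + 1) - 1 ∧ k ≤ SA j) : openPos SA Z n i k ≤ j :=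
  Nat.sInf_le (Or.inr hj)

lemma close_bdd (SA Z : ℕ → ℕ) (i k : ℕ) :
    BddAbove ({0} ∪ {j | Z i ≤ j ∧ j ≤ Z (i + 1) - 1 ∧ k ≤ SA j} : Set ℕ) := by
  refine ⟨Z (i + 1) - 1, ?_⟩
  rintro x (hx | hx)
  · simp only [Set.mem_singleton_iff] at hx; omega
  · exact hx.2.1

lemma close_mem (SA Z : ℕ → ℕ) (i k : ℕ) (h : 1 ≤ closePos SA Z i k) :
    Z i ≤ closePos SA Z i k ∧ closePos SA Z i k ≤ Z (i + 1) - 1 ∧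
      k ≤ SA (closePos SA Z i k) := by
  have hmem := Nat.sSup_mem (s := ({0} ∪ {j | Z i ≤ j ∧ j ≤ Z (i + 1) - 1 ∧ k ≤ SA j} : Set ℕ))
    ⟨0, Or.inl rfl⟩ (close_bdd SA Z i k)
  rcases hmem with h1 | h2
  · exfalso
    have : closePos SA Z i k = 0 := h1
    omega
  · exact h2

lemma close_ge (SA Z : ℕ → ℕ) (i k j : ℕ)
    (hj : Z i ≤ j ∧ j ≤ Z (i + 1) - 1 ∧ k ≤ SA j) : j ≤ closePos SA Z i k :=
  le_csSup (close_bdd SA Z i k) (Or.inr hj)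

lemma cover (f : ℕ → ℕ) (r j : ℕ) (hr : 1 ≤ r) (h1 : f 1 ≤ j) (hend : j < f (r + 1)) :
    ∃ m, 1 ≤ m ∧ m ≤ r ∧ f m ≤ j ∧ j < f (m + 1) := by
  have hsne : ((Finset.Icc 1 r).filter (fun m => f m ≤ j)).Nonempty :=
    ⟨1, by simp [hr, h1]⟩
  set m := ((Finset.Icc 1 r).filter (fun m => f m ≤ j)).max' hsne with hm
  have hmem := Finset.max'_mem _ hsne
  rw [← hm] at hmem
  simp only [Finset.mem_filter, Finset.mem_Icc] at hmem
  refine ⟨m, hmem.1.1, hmem.1.2, hmem.2, ?_⟩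
  by_cases hmr : m = r
  · rw [hmr]; exact hend
  · by_contra hc
    push_neg at hc
    have : m + 1 ∈ (Finset.Icc 1 r).filter (fun m => f m ≤ j) := by
      simp only [Finset.mem_filter, Finset.mem_Icc]
      exact ⟨⟨by omega, by omega⟩, hc⟩
    have := Finset.le_max' _ _ this
    omega

/-- Let `[b..e] ⊆ [1..n]` be an interval for which case (B) holds and let
`k ∈ [1..n]`.  Then there exists `j ∈ [b..e]` with `SA[j] ≥ k` if and only if
`T_k ∩ [b..e] ≠ ∅`, where `T_k` is the set of all `k`-open and `k`-close
positions; moreover, every `j ∈ T_k ∩ [b..e]` satisfies `SA[j] ≥ k`. -/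
theorem stmt9 {α : Type*} [LinearOrder α] (n : ℕ) (hn : 1 ≤ n)
    (T : ℕ → α) (SA : ℕ → ℕ) (L : ℕ → α)
    (hlast : ∀ i, 1 ≤ i → i < n → T n < T i)
    (hSAbij : Set.BijOn SA (Set.Icc 1 n) (Set.Icc 1 n))
    (hSAsorted : ∀ i j, 1 ≤ i → i < j → j ≤ n →
      List.Lex (· < ·) (suffix T n (SA i)) (suffix T n (SA j)))
    (hL : ∀ i, 1 ≤ i → i ≤ n → L i = if SA i = 1 then T n else T (SA i - 1))
    -- the run-length encoding `L_1, …, L_r` of `L`: run `L_m` starts at `p m`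
    -- and has length `len m`
    (r : ℕ) (p len : ℕ → ℕ) (hr : 1 ≤ r)
    (hp1 : p 1 = 1) (hpend : p (r + 1) = n + 1)
    (hpsucc : ∀ m, 1 ≤ m → m ≤ r → p (m + 1) = p m + len m)
    (hlen : ∀ m, 1 ≤ m → m ≤ r → 1 ≤ len m)
    (hrunconst : ∀ m, 1 ≤ m → m ≤ r → ∀ j, p m ≤ j → j < p (m + 1) → L j = L (p m))
    (hrunmax : ∀ m, 1 ≤ m → m < r → L (p m) ≠ L (p (m + 1)))
    -- `X` is the permutation of `[1..r]` sorting the runs by `LF(p(·))`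
    (X : ℕ → ℕ)
    (hXbij : Set.BijOn X (Set.Icc 1 r) (Set.Icc 1 r))
    (hXsorted : ∀ i j, 1 ≤ i → i < j → j ≤ r → LF L n (p (X i)) < LF L n (p (X j)))
    -- `Z[i] = LF(p(X[i]))` for `i ∈ [1..r]`, and `Z[r+1] = n+1`
    (Z : ℕ → ℕ)
    (hZ : ∀ i, 1 ≤ i → i ≤ r → Z i = LF L n (p (X i)))
    (hZend : Z (r + 1) = n + 1)
    (b e k : ℕ) (hb : 1 ≤ b) (hbe : b ≤ e) (he : e ≤ n)
    (hk1 : 1 ≤ k) (hkn : k ≤ n)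
    (hB : ¬ CaseA Z r b e) :
    ((∃ j, b ≤ j ∧ j ≤ e ∧ k ≤ SA j) ↔
      ∃ j, b ≤ j ∧ j ≤ e ∧
        ∃ i, 1 ≤ i ∧ i ≤ r ∧ (j = openPos SA Z n i k ∨ j = closePos SA Z i k)) ∧
    (∀ j, b ≤ j → j ≤ e →
      (∃ i, 1 ≤ i ∧ i ≤ r ∧ (j = openPos SA Z n i k ∨ j = closePos SA Z i k)) →
      k ≤ SA j) := by
  -- Part 2 first
  have part2 : ∀ j, b ≤ j → j ≤ e →
      (∃ i, 1 ≤ i ∧ i ≤ r ∧ (j = openPos SA Z n i k ∨ j = closePos SA Z i k)) →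
      k ≤ SA j := by
    rintro j hjb hje ⟨i, hi1, hi2, hj | hj⟩
    · have hle : openPos SA Z n i k ≤ n := by omega
      have := (open_mem SA Z n i k hle).2.2
      rw [hj]; exact this
    · have hge : 1 ≤ closePos SA Z i k := by omega
      have := (close_mem SA Z i k hge).2.2
      rw [hj]; exact this
  refine ⟨⟨?_, ?_⟩, part2⟩
  swap
  · rintro ⟨j, hjb, hje, hT⟩
    exact ⟨j, hjb, hje, part2 j hjb hje hT⟩
  -- forward direction
  rintro ⟨j, hjb, hje, hjk⟩
  -- p m ≥ 1 for m ∈ [1, r+1]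
  have hp_ge : ∀ m, 1 ≤ m → m ≤ r + 1 → 1 ≤ p m := by
    intro m
    induction m with
    | zero => intro h; omega
    | succ m ih =>
      intro _ hle
      by_cases hm : m = 0
      · subst hm; rw [show (0:ℕ)+1 = 1 from rfl, hp1]
      · have h1 : 1 ≤ m := Nat.one_le_iff_ne_zero.mpr hm
        have h2 : m ≤ r := by omega
        rw [hpsucc m h1 h2]
        have := ih h1 (by omega)
        omega
  -- minimal character of L on [1..n] and its first occurrence j₀
  have hFne : (Finset.Icc 1 n).Nonempty := ⟨1, by simp [hn]⟩
  set c := ((Finset.Icc 1 n).image L).min' (hFne.image L) with hc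
  have hcmin : ∀ j' ∈ Finset.Icc 1 n, c ≤ L j' := fun j' hj' =>
    Finset.min'_le _ _ (Finset.mem_image_of_mem L hj')
  have hcex : ∃ j' ∈ Finset.Icc 1 n, L j' = c := by
    have := Finset.min'_mem ((Finset.Icc 1 n).image L) (hFne.image L)
    rw [← hc] at this
    simpa [Finset.mem_image] using this
  have hs0ne : ((Finset.Icc 1 n).filter (fun j' => L j' = c)).Nonempty := by
    obtain ⟨j', hj', hjc⟩ := hcex
    exact ⟨j', by simp [Finset.mem_filter, hj', hjc]⟩
  set j₀ := ((Finset.Icc 1 n).filter (fun j' => L j' = c)).min' hs0ne with hj0def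
  have hj0mem := Finset.min'_mem _ hs0ne
  rw [← hj0def] at hj0mem
  simp only [Finset.mem_filter, Finset.mem_Icc] at hj0mem
  obtain ⟨⟨hj01, hj0n⟩, hj0c⟩ := hj0mem
  have hj0min : ∀ j' , 1 ≤ j' → j' ≤ n → L j' = c → j₀ ≤ j' := by
    intro j' h1 h2 h3
    exact Finset.min'_le _ _ (by simp [Finset.mem_filter, Finset.mem_Icc, h1, h2, h3])
  -- j₀ is a run head
  obtain ⟨m₀, hm01, hm0r, hm0le, hm0lt⟩ :=
    cover p r j₀ hr (by omega) (by omega)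
  have hpm0 : p m₀ = j₀ := by
    by_contra hne
    have hlt : p m₀ < j₀ := by omega
    have hLpm : L (p m₀) = c := by
      have := hrunconst m₀ hm01 hm0r j₀ hm0le hm0lt
      rw [hj0c] at this; exact this.symm
    have := hj0min (p m₀) (hp_ge m₀ hm01 (by omega)) (by omega) hLpm
    omega
  -- LF L n j₀ = 1
  have hLF1 : LF L n (p m₀) = 1 := by
    rw [hpm0]
    have hCc : Cc L n (L j₀) = 0 := by
      rw [hj0c, Cc, Finset.card_eq_zero, Finset.filter_eq_empty_iff]
      intro j' hj'
      exact not_lt_of_ge (hcmin j' hj')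
    have hrank : rankL L (L j₀) j₀ = 1 := by
      rw [hj0c, rankL]
      have : (Finset.Icc 1 j₀).filter (fun j' => L j' = c) = {j₀} := by
        apply Finset.eq_singleton_iff_unique_mem.mpr
        constructor
        · simp [Finset.mem_filter, Finset.mem_Icc, hj01, hj0c]
        · intro x hx
          simp only [Finset.mem_filter, Finset.mem_Icc] at hx
          have := hj0min x hx.1.1 (by omega) hx.2
          omega
      rw [this, Finset.card_singleton]
    rw [LF, hCc, hrank]
  -- Z 1 ≤ 1
  have hZ1 : Z 1 ≤ 1 := by
    obtain ⟨i₀, hi₀mem, hi₀⟩ := hXbij.surjOn (Set.mem_Icc.mpr ⟨hm01, hm0r⟩)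
    simp only [Set.mem_Icc] at hi₀mem
    have hZi₀ : Z i₀ = 1 := by
      rw [hZ i₀ hi₀mem.1 hi₀mem.2, hi₀, hLF1]
    by_cases h1 : i₀ = 1
    · rw [← h1]; omega
    · have : LF L n (p (X 1)) < LF L n (p (X i₀)) :=
        hXsorted 1 i₀ le_rfl (by omega) hi₀mem.2
      rw [hZ 1 le_rfl hr]
      rw [hi₀, hLF1] at this
      exact this.le
  -- find the Z-interval containing j
  have hZcover := cover Z r j hr (by omega) (by omega)
  obtain ⟨i, hi1, hi2, hZile, hZi1gt⟩ := hZcover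
  have hjS : Z i ≤ j ∧ j ≤ Z (i + 1) - 1 ∧ k ≤ SA j := ⟨hZile, by omega, hjk⟩
  -- case B
  rw [CaseA] at hB
  push_neg at hB
  by_cases hcase : b ≤ Z i
  · -- use openPos
    have hople := open_le SA Z n i k j hjS
    have hopn : openPos SA Z n i k ≤ n := by omega
    have hopmem := open_mem SA Z n i k hopn
    exact ⟨openPos SA Z n i k, by omega, by omega, i, hi1, hi2, Or.inl rfl⟩
  · -- Z i < b, so by case B, Z(i+1)-1 ≤ e; use closePos
    have hZib : Z i < b := by omega
    have he' : Z (i + 1) - 1 ≤ e := hB i hi1 hi2 hZib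
    have hclge := close_ge SA Z i k j hjS
    have hcl1 : 1 ≤ closePos SA Z i k := by omega
    have hclmem := close_mem SA Z i k hcl1
    exact ⟨closePos SA Z i k, by omega, by omega, i, hi1, hi2, Or.inr rfl⟩
end

section
/- Let [b..e] ⊆ [1..n] be an interval for which case (B) holds, let k ∈ [1..n], let b̂ = pred((Z[1],…,Z[r]), b), ê = pred((Z[1],…,Z[r]), e), and let M[i] = max{SA[j] : j ∈ [Z[i], Z[i+1]−1]} for i ∈ [1..r]. Then there exists j ∈ [b..e] with SA[j] ≥ k if and only if at least one of the following holds: (i) close(b̂, k) ∈ [b..e]; (ii) open(ê, k) ∈ [b..e]; (iii) b̂ + 1 ≤ ê − 1 and max{M[i] : i ∈ [b̂+1 .. ê−1]} ≥ k. -/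
/-- `pred(S,x)` for the strictly increasing sequence `S[1..r]`: the number of
entries of `S` that are at most `x`. -/
def predCount (S : ℕ → ℕ) (r x : ℕ) : ℕ :=
  ((Finset.Icc 1 r).filter (fun i => S i ≤ x)).card

lemma locAux (W : ℕ → ℕ) (r : ℕ) (hr : 1 ≤ r) (hW1 : W 1 = 1)
    (hmono : ∀ i j, 1 ≤ i → i ≤ j → j ≤ r + 1 → W i ≤ W j)
    (x : ℕ) (hx1 : 1 ≤ x) (hxn : x < W (r+1)) :
    1 ≤ predCount W r x ∧ predCount W r x ≤ r ∧
      W (predCount W r x) ≤ x ∧ x < W (predCount W r x + 1) := by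
  classical
  set F := (Finset.Icc 1 r).filter (fun i => W i ≤ x) with hF
  have h1F : (1 : ℕ) ∈ F := by
    simp [hF, Finset.mem_filter, hr, hW1, hx1]
  have hFne : F.Nonempty := ⟨1, h1F⟩
  set m := F.max' hFne with hm
  have hmF : m ∈ F := F.max'_mem hFne
  have hm1 : 1 ≤ m := (Finset.mem_Icc.1 (Finset.mem_filter.1 hmF).1).1
  have hmr : m ≤ r := (Finset.mem_Icc.1 (Finset.mem_filter.1 hmF).1).2
  have hWm : W m ≤ x := (Finset.mem_filter.1 hmF).2
  have hxm1 : x < W (m + 1) := by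
    by_contra h
    push_neg at h
    rcases eq_or_lt_of_le hmr with h' | h'
    · exact absurd (lt_of_le_of_lt h (h' ▸ hxn)) (lt_irrefl _)
    · have : m + 1 ∈ F := by
        simp only [hF, Finset.mem_filter, Finset.mem_Icc]
        exact ⟨⟨by omega, by omega⟩, h⟩
      have := F.le_max' _ this
      omega
  have hFeq : F = Finset.Icc 1 m := by
    ext i
    simp only [hF, Finset.mem_filter, Finset.mem_Icc]
    constructor
    · intro ⟨⟨h1, h2⟩, h3⟩
      exact ⟨h1, F.le_max' i (by simp [hF, Finset.mem_filter, Finset.mem_Icc]; exact ⟨⟨h1, h2⟩, h3⟩)⟩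
    · intro ⟨h1, h2⟩
      exact ⟨⟨h1, le_trans h2 hmr⟩, le_trans (hmono i m h1 h2 (by omega)) hWm⟩
  have hcard : predCount W r x = m := by
    rw [predCount, ← hF, hFeq, Nat.card_Icc]; omega
  rw [hcard]
  exact ⟨hm1, hmr, hWm, hxm1⟩

lemma LF_bounds {α : Type*} [LinearOrder α] (L : ℕ → α) (n : ℕ) (i : ℕ)
    (h1 : 1 ≤ i) (h2 : i ≤ n) : 1 ≤ LF L n i ∧ LF L n i ≤ n := by
  classical
  constructor
  · have : i ∈ (Finset.Icc 1 i).filter (fun j => L j = L i) := by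
      simp [Finset.mem_filter, h1]
    have := Finset.card_pos.2 ⟨i, this⟩
    unfold LF rankL
    omega
  · unfold LF rankL Cc
    set A := (Finset.Icc 1 n).filter (fun j => L j < L i) with hA
    set B := (Finset.Icc 1 i).filter (fun j => L j = L i) with hB
    have hdisj : Disjoint A B := by
      rw [Finset.disjoint_left]
      intro a ha hb
      simp only [hA, hB, Finset.mem_filter] at ha hb
      exact absurd (hb.2 ▸ ha.2) (lt_irrefl _)
    have hsub : A ∪ B ⊆ Finset.Icc 1 n := by
      intro a ha
      rcases Finset.mem_union.1 ha with h | h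
      · exact Finset.mem_of_mem_filter a h
      · have := Finset.mem_Icc.1 (Finset.mem_of_mem_filter a h)
        exact Finset.mem_Icc.2 ⟨this.1, this.2.trans h2⟩
    have := Finset.card_le_card hsub
    rw [Finset.card_union_of_disjoint hdisj, Nat.card_Icc] at this
    omega


/-- Let `[b..e] ⊆ [1..n]` be an interval for which case (B) holds, `k ∈ [1..n]`,
`b̂ = pred(Z,b)`, `ê = pred(Z,e)`, and `M[i] = max{SA[j] : j ∈ [Z[i], Z[i+1]−1]}`.
Then there exists `j ∈ [b..e]` with `SA[j] ≥ k` iff (i) `close(b̂,k) ∈ [b..e]`,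
or (ii) `open(ê,k) ∈ [b..e]`, or (iii) `b̂+1 ≤ ê−1` and
`max{M[i] : i ∈ [b̂+1..ê−1]} ≥ k`. -/
theorem stmt10 {α : Type*} [LinearOrder α] (n : ℕ) (hn : 1 ≤ n)
    (T : ℕ → α) (SA : ℕ → ℕ) (L : ℕ → α)
    (hlast : ∀ i, 1 ≤ i → i < n → T n < T i)
    (hSAbij : Set.BijOn SA (Set.Icc 1 n) (Set.Icc 1 n))
    (hSAsorted : ∀ i j, 1 ≤ i → i < j → j ≤ n →
      List.Lex (· < ·) (suffix T n (SA i)) (suffix T n (SA j)))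
    (hL : ∀ i, 1 ≤ i → i ≤ n → L i = if SA i = 1 then T n else T (SA i - 1))
    -- the run-length encoding `L_1, …, L_r` of `L`: run `L_m` starts at `p m`
    -- and has length `len m`
    (r : ℕ) (p len : ℕ → ℕ) (hr : 1 ≤ r)
    (hp1 : p 1 = 1) (hpend : p (r + 1) = n + 1)
    (hpsucc : ∀ m, 1 ≤ m → m ≤ r → p (m + 1) = p m + len m)
    (hlen : ∀ m, 1 ≤ m → m ≤ r → 1 ≤ len m)
    (hrunconst : ∀ m, 1 ≤ m → m ≤ r → ∀ j, p m ≤ j → j < p (m + 1) → L j = L (p m))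
    (hrunmax : ∀ m, 1 ≤ m → m < r → L (p m) ≠ L (p (m + 1)))
    -- `X` is the permutation of `[1..r]` sorting the runs by `LF(p(·))`
    (X : ℕ → ℕ)
    (hXbij : Set.BijOn X (Set.Icc 1 r) (Set.Icc 1 r))
    (hXsorted : ∀ i j, 1 ≤ i → i < j → j ≤ r → LF L n (p (X i)) < LF L n (p (X j)))
    -- `Z[i] = LF(p(X[i]))` for `i ∈ [1..r]`, and `Z[r+1] = n+1`
    (Z : ℕ → ℕ)
    (hZ : ∀ i, 1 ≤ i → i ≤ r → Z i = LF L n (p (X i)))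
    (hZend : Z (r + 1) = n + 1)
    (b e k : ℕ) (hb : 1 ≤ b) (hbe : b ≤ e) (he : e ≤ n)
    (hk1 : 1 ≤ k) (hkn : k ≤ n)
    (hB : ¬ CaseA Z r b e) :
    (∃ j, b ≤ j ∧ j ≤ e ∧ k ≤ SA j) ↔
      (closePos SA Z (predCount Z r b) k ∈ Set.Icc b e ∨
       openPos SA Z n (predCount Z r e) k ∈ Set.Icc b e ∨
       (predCount Z r b + 1 ≤ predCount Z r e - 1 ∧
        k ≤ sSup ((fun i => sSup (SA '' Set.Icc (Z i) (Z (i + 1) - 1))) ''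
                    Set.Icc (predCount Z r b + 1) (predCount Z r e - 1)))) := by
  classical
  -- monotonicity of p
  have hpmono : ∀ j m, 1 ≤ m → m ≤ j → j ≤ r + 1 → p m ≤ p j := by
    intro j
    induction j with
    | zero => intro m h1 h2 _; omega
    | succ j ih =>
      intro m h1 h2 h3
      rcases eq_or_lt_of_le h2 with h | h
      · rw [h]
      · have hj1 : 1 ≤ j := by omega
        have h4 : p m ≤ p j := ih m h1 (by omega) (by omega)
        have h5 := hpsucc j hj1 (by omega)
        have h6 := hlen j hj1 (by omega)
        omega
  have hpmono' : ∀ i j, 1 ≤ i → i ≤ j → j ≤ r + 1 → p i ≤ p j :=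
    fun i j h1 h2 h3 => hpmono j i h1 h2 h3
  have hp1n : ∀ m, 1 ≤ m → m ≤ r + 1 → 1 ≤ p m := by
    intro m h1 h2
    have := hpmono' 1 m le_rfl h1 h2
    omega
  have hpn : ∀ m, 1 ≤ m → m ≤ r → p m ≤ n := by
    intro m h1 h2
    have h3 := hpsucc m h1 h2
    have h4 := hlen m h1 h2
    have h5 := hpmono' (m+1) (r+1) (by omega) (by omega) le_rfl
    omega
  -- bounds on Z over [1..r]
  have hZbounds : ∀ i, 1 ≤ i → i ≤ r → 1 ≤ Z i ∧ Z i ≤ n := by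
    intro i h1 h2
    rw [hZ i h1 h2]
    have hXi := Set.mem_Icc.1 (hXbij.mapsTo (Set.mem_Icc.2 ⟨h1, h2⟩))
    exact LF_bounds L n (p (X i)) (hp1n _ hXi.1 (by omega)) (hpn _ hXi.1 hXi.2)
  have hZsmono : ∀ i j, 1 ≤ i → i < j → j ≤ r + 1 → Z i < Z j := by
    intro i j h1 h2 h3
    rcases eq_or_lt_of_le h3 with h | h
    · have := (hZbounds i h1 (by omega)).2
      rw [h, hZend]
      omega
    · have hjr : j ≤ r := by omega
      rw [hZ i h1 (by omega), hZ j (by omega) hjr]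
      exact hXsorted i j h1 h2 hjr
  have hZmono : ∀ i j, 1 ≤ i → i ≤ j → j ≤ r + 1 → Z i ≤ Z j := by
    intro i j h1 h2 h3
    rcases eq_or_lt_of_le h2 with h | h
    · rw [h]
    · exact le_of_lt (hZsmono i j h1 h h3)
  -- Z 1 = 1
  have hmem1 : (1 : ℕ) ∈ Finset.Icc 1 n := by simp [hn]
  have hsne : ((Finset.Icc 1 n).image L).Nonempty := ⟨L 1, Finset.mem_image_of_mem L hmem1⟩
  set c₀ := ((Finset.Icc 1 n).image L).min' hsne with hc₀
  obtain ⟨j1, hj1, hLj1⟩ := Finset.mem_image.1 (((Finset.Icc 1 n).image L).min'_mem hsne)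
  set Fc := (Finset.Icc 1 n).filter (fun j => L j = c₀) with hFc
  have hFcne : Fc.Nonempty := ⟨j1, Finset.mem_filter.2 ⟨hj1, hLj1⟩⟩
  set j₀ := Fc.min' hFcne with hj₀
  have hj₀mem := Fc.min'_mem hFcne
  have hj₀Icc : j₀ ∈ Finset.Icc 1 n := (Finset.mem_filter.1 hj₀mem).1
  have hLj₀ : L j₀ = c₀ := (Finset.mem_filter.1 hj₀mem).2
  have hj₀1 : 1 ≤ j₀ := (Finset.mem_Icc.1 hj₀Icc).1
  have hj₀n : j₀ ≤ n := (Finset.mem_Icc.1 hj₀Icc).2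
  have hCc0 : Cc L n c₀ = 0 := by
    unfold Cc
    rw [Finset.card_eq_zero, Finset.filter_eq_empty_iff]
    intro j hj
    simp only [not_lt]
    exact ((Finset.Icc 1 n).image L).min'_le (L j) (Finset.mem_image_of_mem L hj)
  have hrank1 : rankL L c₀ j₀ = 1 := by
    unfold rankL
    have heq : (Finset.Icc 1 j₀).filter (fun j => L j = c₀) = {j₀} := by
      ext j
      simp only [Finset.mem_filter, Finset.mem_Icc, Finset.mem_singleton]
      constructor
      · rintro ⟨⟨ha, hbb⟩, hcc⟩
        have hjF : j ∈ Fc :=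
          Finset.mem_filter.2 ⟨Finset.mem_Icc.2 ⟨ha, hbb.trans hj₀n⟩, hcc⟩
        have := Fc.min'_le j hjF
        omega
      · rintro rfl; exact ⟨⟨hj₀1, le_rfl⟩, hLj₀⟩
    rw [heq, Finset.card_singleton]
  obtain ⟨hm1, hmr, hpmle, hltm⟩ :=
    locAux p r hr hp1 hpmono' j₀ hj₀1 (by rw [hpend]; omega)
  set m0 := predCount p r j₀ with hm0def
  have hpm0 : p m0 = j₀ := by
    by_contra hne
    have hlt : p m0 < j₀ := lt_of_le_of_ne hpmle hne
    have e1 : L (j₀ - 1) = L (p m0) := hrunconst m0 hm1 hmr (j₀ - 1) (by omega) (by omega)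
    have e2 : L j₀ = L (p m0) := hrunconst m0 hm1 hmr j₀ (by omega) hltm
    have hm : j₀ - 1 ∈ Fc := Finset.mem_filter.2
      ⟨Finset.mem_Icc.2 ⟨by have := hp1n m0 hm1 (by omega); omega, by omega⟩,
       by rw [e1, ← e2]; exact hLj₀⟩
    have := Fc.min'_le _ hm
    omega
  have hLF1 : LF L n (p m0) = 1 := by
    rw [hpm0]
    unfold LF
    rw [hLj₀, hCc0, hrank1]
  obtain ⟨i0, hi0, hXi0⟩ := hXbij.surjOn (Set.mem_Icc.2 ⟨hm1, hmr⟩ : m0 ∈ Set.Icc 1 r)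
  have hi0' := Set.mem_Icc.1 hi0
  have hZi0 : Z i0 = 1 := by rw [hZ i0 hi0'.1 hi0'.2, hXi0, hLF1]
  have hZ1 : Z 1 = 1 := by
    have h1 := (hZbounds 1 le_rfl hr).1
    rcases eq_or_lt_of_le hi0'.1 with h | h
    · rw [← h] at hZi0; exact hZi0
    · have := hZsmono 1 i0 le_rfl h (by omega)
      omega
  -- locate b and e
  obtain ⟨hbh1, hbhr, hZbh, hbZ⟩ := locAux Z r hr hZ1 hZmono b hb (by rw [hZend]; omega)
  set bh := predCount Z r b with hbhdef
  obtain ⟨heh1, hehr, hZeh, heZ⟩ := locAux Z r hr hZ1 hZmono e (by omega) (by rw [hZend]; omega)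
  set eh := predCount Z r e with hehdef
  have hbheh : bh ≤ eh := by
    rw [hbhdef, hehdef]
    unfold predCount
    apply Finset.card_le_card
    intro i hi
    rw [Finset.mem_filter] at *
    exact ⟨hi.1, le_trans hi.2 hbe⟩
  constructor
  · rintro ⟨j0, hbj0, hj0e, hkj0⟩
    obtain ⟨hjh1, hjhr, hZjh, hjZ⟩ :=
      locAux Z r hr hZ1 hZmono j0 (by omega) (by rw [hZend]; omega)
    set jh := predCount Z r j0 with hjhdef
    have hbhjh : bh ≤ jh := by
      by_contra h
      push_neg at h
      have : Z (jh + 1) ≤ Z bh := hZmono _ _ (by omega) (by omega) (by omega)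
      omega
    have hjheh : jh ≤ eh := by
      by_contra h
      push_neg at h
      have : Z (eh + 1) ≤ Z jh := hZmono _ _ (by omega) (by omega) (by omega)
      omega
    have hopen : Z eh ≤ j0 → b ≤ Z eh → openPos SA Z n eh k ∈ Set.Icc b e := by
      intro hZj hbZe
      unfold openPos
      have hj0m : j0 ∈ ({n + 1} ∪ {j | Z eh ≤ j ∧ j ≤ Z (eh + 1) - 1 ∧ k ≤ SA j} : Set ℕ) :=
        Or.inr ⟨hZj, by omega, hkj0⟩
      have hle := Nat.sInf_le hj0m
      have hne : ({n + 1} ∪ {j | Z eh ≤ j ∧ j ≤ Z (eh + 1) - 1 ∧ k ≤ SA j} : Set ℕ).Nonempty :=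
        ⟨n + 1, Or.inl rfl⟩
      rcases Nat.sInf_mem hne with hx | hx
      · simp only [Set.mem_singleton_iff] at hx; omega
      · exact Set.mem_Icc.2 ⟨le_trans hbZe hx.1, le_trans hle hj0e⟩
    have hclose : Z bh ≤ j0 → j0 ≤ Z (bh + 1) - 1 → Z (bh + 1) - 1 ≤ e →
        closePos SA Z bh k ∈ Set.Icc b e := by
      intro hZj hjle heZb
      unfold closePos
      have hbdd : BddAbove ({0} ∪ {j | Z bh ≤ j ∧ j ≤ Z (bh + 1) - 1 ∧ k ≤ SA j} : Set ℕ) :=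
        ⟨Z (bh + 1) - 1, by
          rintro x (hx | hx)
          · simp only [Set.mem_singleton_iff] at hx; omega
          · exact hx.2.1⟩
      have hj0m : j0 ∈ ({0} ∪ {j | Z bh ≤ j ∧ j ≤ Z (bh + 1) - 1 ∧ k ≤ SA j} : Set ℕ) :=
        Or.inr ⟨hZj, hjle, hkj0⟩
      have hle := le_csSup hbdd hj0m
      rcases Nat.sSup_mem ⟨0, Or.inl rfl⟩ hbdd with hx | hx
      · simp only [Set.mem_singleton_iff] at hx; omega
      · exact Set.mem_Icc.2 ⟨le_trans hbj0 hle, le_trans hx.2.1 heZb⟩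
    by_cases h1 : bh < jh
    · by_cases h2 : jh < eh
      · right; right
        refine ⟨by omega, ?_⟩
        have hj0mem : SA j0 ∈ SA '' Set.Icc (Z jh) (Z (jh + 1) - 1) :=
          ⟨j0, Set.mem_Icc.2 ⟨hZjh, by omega⟩, rfl⟩
        have hbdd1 : BddAbove (SA '' Set.Icc (Z jh) (Z (jh + 1) - 1)) :=
          ((Set.finite_Icc _ _).image _).bddAbove
        have hle1 := le_csSup hbdd1 hj0mem
        have hmem2 : sSup (SA '' Set.Icc (Z jh) (Z (jh + 1) - 1)) ∈
            (fun i => sSup (SA '' Set.Icc (Z i) (Z (i + 1) - 1))) '' Set.Icc (bh + 1) (eh - 1) :=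
          ⟨jh, Set.mem_Icc.2 ⟨by omega, by omega⟩, rfl⟩
        have hbdd2 : BddAbove ((fun i => sSup (SA '' Set.Icc (Z i) (Z (i + 1) - 1))) ''
            Set.Icc (bh + 1) (eh - 1)) := ((Set.finite_Icc _ _).image _).bddAbove
        exact le_trans hkj0 (le_trans hle1 (le_csSup hbdd2 hmem2))
      · -- jh = eh, bh < eh
        right; left
        have hje : jh = eh := by omega
        rw [hje] at hZjh
        refine hopen hZjh ?_
        have := hZmono (bh + 1) eh (by omega) (by omega) (by omega)
        omega
    · -- jh = bh
      have hje : jh = bh := by omega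
      rw [hje] at hZjh hjZ
      by_cases h2 : bh < eh
      · left
        refine hclose hZjh (by omega) ?_
        have := hZmono (bh + 1) eh (by omega) (by omega) (by omega)
        omega
      · -- bh = eh
        have hbe' : bh = eh := by omega
        have hnC : ¬(Z bh < b ∧ e < Z (bh + 1) - 1) := fun h =>
          hB ⟨bh, hbh1, hbhr, h.1, h.2⟩
        by_cases hzb : Z bh < b
        · left
          refine hclose hZjh (by omega) ?_
          by_contra h
          exact hnC ⟨hzb, by omega⟩
        · right; left
          have hZbe : Z bh = Z eh := by rw [hbe']
          rw [hZbe] at hZjh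
          exact hopen hZjh (by omega)
  · rintro (hcl | hop | ⟨hiii, hmax⟩)
    · unfold closePos at hcl
      rw [Set.mem_Icc] at hcl
      have hbdd : BddAbove ({0} ∪ {j | Z bh ≤ j ∧ j ≤ Z (bh + 1) - 1 ∧ k ≤ SA j} : Set ℕ) :=
        ⟨Z (bh + 1) - 1, by
          rintro x (hx | hx)
          · simp only [Set.mem_singleton_iff] at hx; omega
          · exact hx.2.1⟩
      rcases Nat.sSup_mem ⟨0, Or.inl rfl⟩ hbdd with hx | hx
      · simp only [Set.mem_singleton_iff] at hx; omega
      · exact ⟨_, hcl.1, hcl.2, hx.2.2⟩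
    · unfold openPos at hop
      rw [Set.mem_Icc] at hop
      have hne : ({n + 1} ∪ {j | Z eh ≤ j ∧ j ≤ Z (eh + 1) - 1 ∧ k ≤ SA j} : Set ℕ).Nonempty :=
        ⟨n + 1, Or.inl rfl⟩
      rcases Nat.sInf_mem hne with hx | hx
      · simp only [Set.mem_singleton_iff] at hx; omega
      · exact ⟨_, hop.1, hop.2, hx.2.2⟩
    · have hOutne : ((fun i => sSup (SA '' Set.Icc (Z i) (Z (i + 1) - 1))) ''
          Set.Icc (bh + 1) (eh - 1)).Nonempty := (Set.nonempty_Icc.2 hiii).image _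
      have hOutbdd : BddAbove ((fun i => sSup (SA '' Set.Icc (Z i) (Z (i + 1) - 1))) ''
          Set.Icc (bh + 1) (eh - 1)) := ((Set.finite_Icc _ _).image _).bddAbove
      obtain ⟨i, hiIcc, hMi⟩ := Nat.sSup_mem hOutne hOutbdd
      rw [Set.mem_Icc] at hiIcc
      have hi1 : 1 ≤ i := by omega
      have hir : i ≤ r := by omega
      have hZlt : Z i < Z (i + 1) := hZsmono i (i + 1) hi1 (by omega) (by omega)
      have hInne : (SA '' Set.Icc (Z i) (Z (i + 1) - 1)).Nonempty :=
        (Set.nonempty_Icc.2 (by omega)).image _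
      have hInbdd : BddAbove (SA '' Set.Icc (Z i) (Z (i + 1) - 1)) :=
        ((Set.finite_Icc _ _).image _).bddAbove
      obtain ⟨j, hjIcc, hSAj⟩ := Nat.sSup_mem hInne hInbdd
      rw [Set.mem_Icc] at hjIcc
      refine ⟨j, ?_, ?_, ?_⟩
      · have := hZmono (bh + 1) i (by omega) hiIcc.1 (by omega)
        omega
      · have := hZmono (i + 1) eh (by omega) (by omega) (by omega)
        omega
      · have : k ≤ (fun i => sSup (SA '' Set.Icc (Z i) (Z (i + 1) - 1))) i :=
          hmax.trans (le_of_eq hMi.symm)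
        rw [hSAj]
        exact this
end

section
/- Let k ∈ [2..n], let x ∈ [1..n] be the position with SA[x] = k − 1, and let p = pred((Z[1],…,Z[r]), x). Then for every i ∈ [1..r] with i ≠ p, open(i, k−1) = open(i, k) and close(i, k−1) = close(i, k); that is, decrementing the threshold from k to k−1 changes the open and close positions of at most one PSA subarray, namely the one containing position x. -/
/-- Let `k ∈ [2..n]`, let `x ∈ [1..n]` be the position with `SA[x] = k − 1`, and
let `p = pred(Z, x)`.  Then for every `i ∈ [1..r]` with `i ≠ p`,
`open(i, k−1) = open(i, k)` and `close(i, k−1) = close(i, k)`: decrementing the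
threshold from `k` to `k−1` changes the open and close positions of at most one
PSA subarray, namely the one containing position `x`. -/
theorem stmt11 {α : Type*} [LinearOrder α] (n : ℕ) (hn : 1 ≤ n)
    (T : ℕ → α) (SA : ℕ → ℕ) (L : ℕ → α)
    (hlast : ∀ i, 1 ≤ i → i < n → T n < T i)
    (hSAbij : Set.BijOn SA (Set.Icc 1 n) (Set.Icc 1 n))
    (hSAsorted : ∀ i j, 1 ≤ i → i < j → j ≤ n →
      List.Lex (· < ·) (suffix T n (SA i)) (suffix T n (SA j)))
    (hL : ∀ i, 1 ≤ i → i ≤ n → L i = if SA i = 1 then T n else T (SA i - 1))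
    -- the run-length encoding `L_1, …, L_r` of `L`: run `L_m` starts at `p m`
    -- and has length `len m`
    (r : ℕ) (p len : ℕ → ℕ) (hr : 1 ≤ r)
    (hp1 : p 1 = 1) (hpend : p (r + 1) = n + 1)
    (hpsucc : ∀ m, 1 ≤ m → m ≤ r → p (m + 1) = p m + len m)
    (hlen : ∀ m, 1 ≤ m → m ≤ r → 1 ≤ len m)
    (hrunconst : ∀ m, 1 ≤ m → m ≤ r → ∀ j, p m ≤ j → j < p (m + 1) → L j = L (p m))
    (hrunmax : ∀ m, 1 ≤ m → m < r → L (p m) ≠ L (p (m + 1)))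
    -- `X` is the permutation of `[1..r]` sorting the runs by `LF(p(·))`
    (X : ℕ → ℕ)
    (hXbij : Set.BijOn X (Set.Icc 1 r) (Set.Icc 1 r))
    (hXsorted : ∀ i j, 1 ≤ i → i < j → j ≤ r → LF L n (p (X i)) < LF L n (p (X j)))
    -- `Z[i] = LF(p(X[i]))` for `i ∈ [1..r]`, and `Z[r+1] = n+1`
    (Z : ℕ → ℕ)
    (hZ : ∀ i, 1 ≤ i → i ≤ r → Z i = LF L n (p (X i)))
    (hZend : Z (r + 1) = n + 1)
    (k x : ℕ) (hk2 : 2 ≤ k) (hkn : k ≤ n)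
    (hx1 : 1 ≤ x) (hxn : x ≤ n) (hSAx : SA x = k - 1) :
    ∀ i, 1 ≤ i → i ≤ r → i ≠ predCount Z r x →
      openPos SA Z n i (k - 1) = openPos SA Z n i k ∧
      closePos SA Z i (k - 1) = closePos SA Z i k := by
  -- p is monotone
  have hpmono : ∀ a b, 1 ≤ a → a ≤ b → b ≤ r + 1 → p a ≤ p b := by
    intro a b h1 hab hb
    induction b, hab using Nat.le_induction with
    | base => exact le_rfl
    | succ b hab ih =>
      have hb' : b ≤ r := by omega
      have h := hpsucc b (by omega) hb'
      have hl := hlen b (by omega) hb'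
      have := ih (by omega)
      omega
  have hpbound : ∀ m, 1 ≤ m → m ≤ r → 1 ≤ p m ∧ p m ≤ n := by
    intro m h1 h2
    constructor
    · have := hpmono 1 m le_rfl h1 (by omega)
      omega
    · have h := hpmono (m + 1) (r + 1) (by omega) (by omega) le_rfl
      have h2' := hpsucc m h1 h2
      have h3 := hlen m h1 h2
      omega
  have hLF : ∀ j, 1 ≤ j → j ≤ n → 1 ≤ LF L n j ∧ LF L n j ≤ n := by
    intro j h1 h2
    unfold LF
    constructor
    · have : 1 ≤ rankL L (L j) j := by
        unfold rankL
        refine Finset.card_pos.mpr ⟨j, ?_⟩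
        simp [Finset.mem_filter, Finset.mem_Icc, h1]
      omega
    · unfold Cc rankL
      set A := (Finset.Icc 1 n).filter (fun j' => L j' < L j) with hA
      set B := (Finset.Icc 1 j).filter (fun j' => L j' = L j) with hB
      have hdisj : Disjoint A B := by
        rw [Finset.disjoint_left]
        intro a ha hb
        rw [hA, Finset.mem_filter] at ha
        rw [hB, Finset.mem_filter] at hb
        exact absurd (hb.2 ▸ ha.2) (lt_irrefl _)
      have hsub : A ∪ B ⊆ Finset.Icc 1 n := by
        intro a ha
        rcases Finset.mem_union.mp ha with h | h
        · exact (Finset.mem_filter.mp h).1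
        · have := (Finset.mem_filter.mp h).1
          rw [Finset.mem_Icc] at this ⊢
          omega
      have := Finset.card_le_card hsub
      rw [Finset.card_union_of_disjoint hdisj] at this
      simpa using this
  have hZbound : ∀ i, 1 ≤ i → i ≤ r → 1 ≤ Z i ∧ Z i ≤ n := by
    intro i h1 h2
    rw [hZ i h1 h2]
    have hXi : X i ∈ Set.Icc 1 r := hXbij.mapsTo ⟨h1, h2⟩
    have hp := hpbound (X i) hXi.1 hXi.2
    exact hLF _ hp.1 hp.2
  have hZmono : ∀ i, 1 ≤ i → i ≤ r → Z i < Z (i + 1) := by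
    intro i h1 h2
    rcases eq_or_lt_of_le h2 with heq | hlt
    · rw [heq, hZend]
      have := (hZbound r hr le_rfl).2
      omega
    · rw [hZ i h1 h2, hZ (i + 1) (by omega) hlt]
      exact hXsorted i (i + 1) h1 (lt_add_one i) hlt
  have hZle : ∀ a b, 1 ≤ a → a ≤ b → b ≤ r + 1 → Z a ≤ Z b := by
    intro a b h1 hab hb
    induction b, hab using Nat.le_induction with
    | base => exact le_rfl
    | succ b hab ih =>
      have := hZmono b (by omega) (by omega)
      have := ih (by omega)
      omega
  intro i h1 h2 hne
  -- x is not in the interval [Z i, Z (i+1) - 1]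
  have hnotin : ¬ (Z i ≤ x ∧ x ≤ Z (i + 1) - 1) := by
    rintro ⟨ha, hb⟩
    apply hne
    have hZi1 : Z i < Z (i + 1) := hZmono i h1 h2
    have hxlt : x < Z (i + 1) := by omega
    have : ((Finset.Icc 1 r).filter (fun m => Z m ≤ x)) = Finset.Icc 1 i := by
      ext m
      simp only [Finset.mem_filter, Finset.mem_Icc]
      constructor
      · rintro ⟨⟨hm1, hmr⟩, hmx⟩
        refine ⟨hm1, ?_⟩
        by_contra hc
        have : Z (i + 1) ≤ Z m := hZle (i + 1) m (by omega) (by omega) (by omega)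
        omega
      · rintro ⟨hm1, hmi⟩
        have : Z m ≤ Z i := hZle m i hm1 hmi (by omega)
        exact ⟨⟨hm1, by omega⟩, by omega⟩
    unfold predCount
    rw [this, Nat.card_Icc]
    omega
  have hset : {j | Z i ≤ j ∧ j ≤ Z (i + 1) - 1 ∧ k - 1 ≤ SA j}
      = {j | Z i ≤ j ∧ j ≤ Z (i + 1) - 1 ∧ k ≤ SA j} := by
    ext j
    simp only [Set.mem_setOf_eq]
    constructor
    · rintro ⟨ha, hb, hc⟩
      refine ⟨ha, hb, ?_⟩
      have hj1 : 1 ≤ j := le_trans (hZbound i h1 h2).1 ha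
      have hjn : j ≤ n := by
        rcases eq_or_lt_of_le h2 with heq | hlt
        · rw [heq, hZend] at hb; omega
        · have := (hZbound (i + 1) (by omega) hlt).2
          omega
      have hjx : j ≠ x := fun h => hnotin ⟨h ▸ ha, h ▸ hb⟩
      have hSAne : SA j ≠ k - 1 := fun heq =>
        hjx (hSAbij.injOn ⟨hj1, hjn⟩ ⟨hx1, hxn⟩ (heq.trans hSAx.symm))
      omega
    · rintro ⟨ha, hb, hc⟩
      exact ⟨ha, hb, by omega⟩
  constructor
  · unfold openPos
    rw [hset]
  · unfold closePos
    rw [hset]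
end

section
/- For every character c and every position x ∈ [1..n], with t = pred((B_c[1],…,B_c[run(c)]), x): if L[x] = c then t ≥ 1 and rank(L,c,x) = V_c[t] + x − B_c[t]; otherwise rank(L,c,x) = V_c[t+1] − 1 (where for t = 0 the value V_c[1] is rank(L,c,B_c[1]) if run(c) ≥ 1 and rank(L,c,n)+1 if run(c) = 0). -/
/- auxiliary lemmas -/

lemma rank_add {α : Type*} [DecidableEq α] (L : ℕ → α) (c : α) (a b : ℕ) (h : a ≤ b) :
    rankL L c b = rankL L c a + ((Finset.Icc (a+1) b).filter (fun j => L j = c)).card := by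
  unfold rankL
  have hsplit : Finset.Icc 1 b = Finset.Icc 1 a ∪ Finset.Icc (a+1) b := by
    ext k; simp only [Finset.mem_Icc, Finset.mem_union]; omega
  rw [hsplit, Finset.filter_union, Finset.card_union_of_disjoint]
  apply Finset.disjoint_filter_filter
  rw [Finset.disjoint_left]
  intro k hk hk'
  simp only [Finset.mem_Icc] at hk hk'
  omega

lemma pred_iff (B : ℕ → ℕ) (rc x : ℕ)
    (hBmono : ∀ i j, 1 ≤ i → i < j → j ≤ rc → B i < B j) :
    ∀ j, 1 ≤ j → j ≤ rc → (B j ≤ x ↔ j ≤ predCount B rc x) := by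
  intro j hj1 hjrc
  constructor
  · intro hBj
    have hsub : Finset.Icc 1 j ⊆ (Finset.Icc 1 rc).filter (fun i => B i ≤ x) := by
      intro k hk
      simp only [Finset.mem_Icc] at hk
      simp only [Finset.mem_filter, Finset.mem_Icc]
      refine ⟨⟨hk.1, le_trans hk.2 hjrc⟩, ?_⟩
      rcases eq_or_lt_of_le hk.2 with h | h
      · exact h ▸ hBj
      · exact le_of_lt (lt_of_lt_of_le (hBmono k j hk.1 h hjrc) hBj)
    have := Finset.card_le_card hsub
    simpa [predCount, Nat.card_Icc] using this
  · intro hjt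
    by_contra hBj
    push_neg at hBj
    have hsub : (Finset.Icc 1 rc).filter (fun i => B i ≤ x) ⊆ Finset.Icc 1 (j-1) := by
      intro k hk
      simp only [Finset.mem_filter, Finset.mem_Icc] at hk
      simp only [Finset.mem_Icc]
      refine ⟨hk.1.1, ?_⟩
      by_contra hkj
      push_neg at hkj
      have hjk : j ≤ k := by omega
      have : B j ≤ B k := by
        rcases eq_or_lt_of_le hjk with h | h
        · exact h ▸ le_refl _
        · exact le_of_lt (hBmono j k hj1 h hk.1.2)
      omega
    have := Finset.card_le_card hsub
    have h2 : predCount B rc x ≤ j - 1 := by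
      simpa [predCount, Nat.card_Icc] using this
    omega

lemma run_start {α : Type*} [DecidableEq α] (L : ℕ → α) (c : α) :
    ∀ x, 1 ≤ x → L x = c →
      ∃ s, 1 ≤ s ∧ s ≤ x ∧ (∀ j, s ≤ j → j ≤ x → L j = c) ∧ (s = 1 ∨ L (s-1) ≠ c) := by
  intro x
  induction x with
  | zero => intro h; omega
  | succ m ih =>
    intro _ hLx
    by_cases hm : m = 0
    · subst hm
      refine ⟨1, le_refl _, le_refl _, ?_, Or.inl rfl⟩
      intro j h1 h2
      have : j = 1 := by omega
      exact this ▸ hLx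
    · by_cases hLm : L m = c
      · obtain ⟨s, hs1, hs2, hall, hstart⟩ := ih (by omega) hLm
        refine ⟨s, hs1, by omega, ?_, hstart⟩
        intro j hj1 hj2
        rcases Nat.lt_or_ge j (m+1) with h | h
        · exact hall j hj1 (by omega)
        · have : j = m + 1 := by omega
          exact this ▸ hLx
      · refine ⟨m+1, by omega, le_refl _, ?_, Or.inr (by simpa using hLm)⟩
        intro j hj1 hj2
        have : j = m + 1 := by omega
        exact this ▸ hLx

/-- The first occurrence of `c` strictly after a non-`c` position `x` is a run
start, hence some `B i` with `x < B i ≤ y`. -/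
lemma first_c {α : Type*} [DecidableEq α]
    (n : ℕ) (L : ℕ → α) (c : α) (rc : ℕ) (B : ℕ → ℕ)
    (hBall : ∀ x, 1 ≤ x → x ≤ n → L x = c → (x = 1 ∨ L (x - 1) ≠ c) →
      ∃ i, 1 ≤ i ∧ i ≤ rc ∧ B i = x)
    (x y : ℕ) (hx1 : 1 ≤ x) (hLx : L x ≠ c) (hxy : x < y) (hyn : y ≤ n)
    (hLy : L y = c) :
    ∃ i, 1 ≤ i ∧ i ≤ rc ∧ x < B i ∧ B i ≤ y := by
  classical
  set S := (Finset.Icc (x+1) y).filter (fun j => L j = c) with hS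
  have hyS : y ∈ S := by
    simp only [hS, Finset.mem_filter, Finset.mem_Icc]
    exact ⟨⟨by omega, le_refl _⟩, hLy⟩
  have hne : S.Nonempty := ⟨y, hyS⟩
  set z := S.min' hne with hz
  have hzS : z ∈ S := S.min'_mem hne
  simp only [hS, Finset.mem_filter, Finset.mem_Icc] at hzS
  obtain ⟨⟨hz1, hz2⟩, hzc⟩ := hzS
  have hstart : L (z - 1) ≠ c := by
    by_cases h : z - 1 = x
    · rw [h]; exact hLx
    · intro hc
      have hmem : z - 1 ∈ S := by
        simp only [hS, Finset.mem_filter, Finset.mem_Icc]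
        exact ⟨⟨by omega, by omega⟩, hc⟩
      have := S.min'_le _ hmem
      omega
  obtain ⟨i, hi1, hi2, hBi⟩ := hBall z (by omega) (le_trans hz2 hyn) hzc
    (Or.inr hstart)
  exact ⟨i, hi1, hi2, by omega, by omega⟩

/-- For every character `c` and position `x ∈ [1..n]`, with
`t = pred((B_c[1],…,B_c[run(c)]), x)`: if `L[x] = c` then `t ≥ 1` and
`rank(L,c,x) = V_c[t] + x − B_c[t]`; otherwise `rank(L,c,x) = V_c[t+1] − 1`. -/
theorem stmt15 {α : Type*} [DecidableEq α]
    (n : ℕ) (hn : 1 ≤ n) (L : ℕ → α) (c : α)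
    -- `B 1 < ⋯ < B rc` are the starting positions of the maximal runs of `c`
    -- in `L[1..n]`
    (rc : ℕ) (B V : ℕ → ℕ)
    (hBmono : ∀ i j, 1 ≤ i → i < j → j ≤ rc → B i < B j)
    (hBrun : ∀ i, 1 ≤ i → i ≤ rc →
      1 ≤ B i ∧ B i ≤ n ∧ L (B i) = c ∧ (B i = 1 ∨ L (B i - 1) ≠ c))
    (hBall : ∀ x, 1 ≤ x → x ≤ n → L x = c → (x = 1 ∨ L (x - 1) ≠ c) →
      ∃ i, 1 ≤ i ∧ i ≤ rc ∧ B i = x)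
    -- `V i = rank(L, c, B i)` and `V (rc+1) = rank(L,c,n) + 1`
    (hV : ∀ i, 1 ≤ i → i ≤ rc → V i = rankL L c (B i))
    (hVend : V (rc + 1) = rankL L c n + 1)
    :
    ∀ x, 1 ≤ x → x ≤ n →
      (L x = c → 1 ≤ predCount B rc x ∧
        rankL L c x = V (predCount B rc x) + (x - B (predCount B rc x))) ∧
      (L x ≠ c → rankL L c x = V (predCount B rc x + 1) - 1) := by
  intro x hx1 hxn
  have hpred := pred_iff B rc x hBmono
  have htle : predCount B rc x ≤ rc := by
    have := Finset.card_filter_le (Finset.Icc 1 rc) (fun i => B i ≤ x)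
    simpa [predCount, Nat.card_Icc] using this
  constructor
  · -- case L x = c
    intro hLx
    obtain ⟨s, hs1, hs2, hall, hstart⟩ := run_start L c x hx1 hLx
    obtain ⟨i, hi1, hi2, hBi⟩ := hBall s hs1 (le_trans hs2 hxn)
      (hall s (le_refl _) hs2) hstart
    -- show predCount = i
    have hit : i ≤ predCount B rc x := (hpred i hi1 hi2).mp (by omega)
    have hti : predCount B rc x ≤ i := by
      by_contra h
      push_neg at h
      have hi1rc : i + 1 ≤ rc := by omega
      have hBle : B (i+1) ≤ x := (hpred (i+1) (by omega) hi1rc).mpr (by omega)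
      have hgt : B i < B (i+1) := hBmono i (i+1) hi1 (by omega) hi1rc
      -- B (i+1) is in (s, x], so L (B (i+1) - 1) = c, contradiction with run start
      obtain ⟨hb1, hb2, hb3, hb4⟩ := hBrun (i+1) (by omega) hi1rc
      have hprev : L (B (i+1) - 1) = c := hall (B (i+1) - 1) (by omega) (by omega)
      rcases hb4 with h | h
      · omega
      · exact h hprev
    have ht : predCount B rc x = i := le_antisymm hti hit
    refine ⟨by omega, ?_⟩
    rw [ht, hV i hi1 hi2, hBi, rank_add L c s x hs2]
    congr 1
    have hfilt : (Finset.Icc (s+1) x).filter (fun j => L j = c) = Finset.Icc (s+1) x := by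
      apply Finset.filter_true_of_mem
      intro j hj
      simp only [Finset.mem_Icc] at hj
      exact hall j (by omega) hj.2
    rw [hfilt, Nat.card_Icc]
    omega
  · -- case L x ≠ c
    intro hLx
    set t := predCount B rc x with htdef
    rcases eq_or_lt_of_le htle with heq | hlt
    · -- t = rc : rank x = rank n
      rw [heq, hVend]
      have hfilt : (Finset.Icc (x+1) n).filter (fun j => L j = c) = ∅ := by
        rw [Finset.filter_eq_empty_iff]
        intro y hy hc
        simp only [Finset.mem_Icc] at hy
        obtain ⟨i, hi1, hi2, hgt, _⟩ :=
          first_c n L c rc B hBall x y hx1 hLx (by omega) hy.2 hc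
        have := (hpred i hi1 hi2).mpr (by omega)
        omega
      have := rank_add L c x n hxn
      rw [hfilt] at this
      simp at this
      omega
    · -- t < rc
      have ht1 : 1 ≤ t + 1 := by omega
      have ht2 : t + 1 ≤ rc := by omega
      have hBgt : x < B (t+1) := by
        by_contra h
        push_neg at h
        have := (hpred (t+1) ht1 ht2).mp h
        omega
      obtain ⟨hb1, hb2, hb3, _⟩ := hBrun (t+1) ht1 ht2
      rw [hV (t+1) ht1 ht2]
      have hfilt : (Finset.Icc (x+1) (B (t+1))).filter (fun j => L j = c) = {B (t+1)} := by
        ext y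
        simp only [Finset.mem_filter, Finset.mem_Icc, Finset.mem_singleton]
        constructor
        · rintro ⟨⟨hy1, hy2⟩, hc⟩
          by_contra hne
          have hylt : y < B (t+1) := by omega
          obtain ⟨i, hi1, hi2, hgt, hle⟩ :=
            first_c n L c rc B hBall x y hx1 hLx (by omega) (by omega) hc
          have hit : ¬ (i ≤ t) := by
            intro h
            have := (hpred i hi1 hi2).mpr h
            omega
          have : B (t+1) ≤ B i := by
            rcases eq_or_lt_of_le (by omega : t + 1 ≤ i) with h | h
            · exact h ▸ le_refl _
            · exact le_of_lt (hBmono (t+1) i ht1 h hi2)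
          omega
        · intro h
          exact ⟨⟨by omega, by omega⟩, h ▸ hb3⟩
      have := rank_add L c x (B (t+1)) (by omega)
      rw [hfilt] at this
      simp at this
      omega
end
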